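/- arXiv:2507.15733 — 6 statements merged into one kernel-verified Lean document; each statement's English description precedes it below -/
import Mathlib

section
/- If Σ is the disjoint union of sets A and B and D = A² ∪ B², then the trace monoid M = Σ*/∼ is isomorphic to the direct product A* × B* of free monoids. -/
def Indep {α : Type*} (D : α → α → Prop) (a b : α) : Prop := a ≠ b ∧ ¬ D a b

/-- The trace congruence: least monoid congruence with `ab ∼ ba` for independent `(a,b)`. -/
def traceCon {α : Type*} (D : α → α → Prop) : Con (FreeMonoid α) :=
  conGen (fun u v => ∃ a b, Indep D a b ∧
    u = FreeMonoid.of a * FreeMonoid.of b ∧ v = FreeMonoid.of b * FreeMonoid.of a)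

/-- If `Σ = A ⊎ B` and `D = A² ∪ B²`, the trace monoid is isomorphic to `A* × B*`. -/
theorem stmt5 {A B : Type*}
    (D : A ⊕ B → A ⊕ B → Prop)
    (hD : ∀ x y, D x y ↔ ((x.isLeft ∧ y.isLeft) ∨ (x.isRight ∧ y.isRight))) :
    Nonempty ((traceCon D).Quotient ≃* (FreeMonoid A × FreeMonoid B)) := by
  classical
  -- the projection hom
  set φ : FreeMonoid (A ⊕ B) →* FreeMonoid A × FreeMonoid B :=
    FreeMonoid.lift (Sum.elim (fun a => (FreeMonoid.of a, 1)) (fun b => (1, FreeMonoid.of b)))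
    with hφ
  have hker : traceCon D ≤ Con.ker φ := by
    apply Con.conGen_le.2
    rintro u v ⟨a, b, ⟨hne, hnd⟩, rfl, rfl⟩
    have : φ (FreeMonoid.of a) * φ (FreeMonoid.of b)
        = φ (FreeMonoid.of b) * φ (FreeMonoid.of a) := by
      rcases a with a | a <;> rcases b with b | b
      · exact absurd ((hD _ _).2 (Or.inl ⟨by simp, by simp⟩)) hnd
      · simp [hφ, Prod.ext_iff]
      · simp [hφ, Prod.ext_iff]
      · exact absurd ((hD _ _).2 (Or.inr ⟨by simp, by simp⟩)) hnd
    simpa [Con.ker_rel, map_mul] using this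
  set φbar : (traceCon D).Quotient →* FreeMonoid A × FreeMonoid B :=
    (traceCon D).lift φ hker with hφbar
  set mk : FreeMonoid (A ⊕ B) →* (traceCon D).Quotient := (traceCon D).mk' with hmk
  set f : FreeMonoid A →* (traceCon D).Quotient :=
    mk.comp (FreeMonoid.map Sum.inl) with hf
  set g : FreeMonoid B →* (traceCon D).Quotient :=
    mk.comp (FreeMonoid.map Sum.inr) with hg
  -- basic commutation of single letters
  have hcomm1 : ∀ (a : A) (b : B),
      mk (FreeMonoid.of (Sum.inl a)) * mk (FreeMonoid.of (Sum.inr b))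
        = mk (FreeMonoid.of (Sum.inr b)) * mk (FreeMonoid.of (Sum.inl a)) := by
    intro a b
    rw [← map_mul, ← map_mul]
    exact (Con.eq _).2 (ConGen.Rel.of _ _
      ⟨Sum.inl a, Sum.inr b, ⟨by simp, by simp [hD]⟩, rfl, rfl⟩)
  have hcommf : ∀ (u : FreeMonoid A) (b : B),
      f u * mk (FreeMonoid.of (Sum.inr b)) = mk (FreeMonoid.of (Sum.inr b)) * f u := by
    intro u b
    induction u using FreeMonoid.recOn with
    | one => simp
    | of_mul x xs ih =>
      have hfo : f (FreeMonoid.of x * xs) = mk (FreeMonoid.of (Sum.inl x)) * f xs := by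
        simp [hf]
      rw [hfo, mul_assoc, ih, ← mul_assoc, hcomm1, mul_assoc]
  have hcomm : ∀ (u : FreeMonoid A) (v : FreeMonoid B), f u * g v = g v * f u := by
    intro u v
    induction v using FreeMonoid.recOn with
    | one => simp
    | of_mul y ys ih =>
      have hgo : g (FreeMonoid.of y * ys) = mk (FreeMonoid.of (Sum.inr y)) * g ys := by
        simp [hg]
      rw [hgo, ← mul_assoc, hcommf, mul_assoc, ih, ← mul_assoc]
  set ψ : FreeMonoid A × FreeMonoid B →* (traceCon D).Quotient :=
    { toFun := fun p => f p.1 * g p.2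
      map_one' := by simp
      map_mul' := by
        rintro ⟨u₁, v₁⟩ ⟨u₂, v₂⟩
        simp only [Prod.fst_mul, Prod.snd_mul, map_mul]
        rw [mul_assoc, ← mul_assoc (f u₂), hcomm u₂ v₁, mul_assoc, ← mul_assoc] }
    with hψ
  -- left inverse
  have hleft : ∀ w : FreeMonoid (A ⊕ B), ψ (φ w) = mk w := by
    intro w
    induction w using FreeMonoid.recOn with
    | one => simp
    | of_mul x xs ih =>
      rw [map_mul, map_mul, ih, map_mul]
      congr 1
      rcases x with a | b <;> simp [hψ, hφ, hf, hg]
  -- right inverse on components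
  have hrf : ∀ u : FreeMonoid A, φbar (f u) = (u, 1) := by
    intro u
    induction u using FreeMonoid.recOn with
    | one => simp; rfl
    | of_mul x xs ih =>
      rw [map_mul, map_mul, ih]
      have : f (FreeMonoid.of x) = mk (FreeMonoid.of (Sum.inl x)) := by simp [hf]
      rw [this]
      have : φbar (mk (FreeMonoid.of (Sum.inl x))) = (FreeMonoid.of x, 1) := by
        simp [hφbar, hmk, hφ]
      rw [this, Prod.ext_iff]
      simp
  have hrg : ∀ v : FreeMonoid B, φbar (g v) = (1, v) := by
    intro v
    induction v using FreeMonoid.recOn with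
    | one => simp; rfl
    | of_mul x xs ih =>
      rw [map_mul, map_mul, ih]
      have : g (FreeMonoid.of x) = mk (FreeMonoid.of (Sum.inr x)) := by simp [hg]
      rw [this]
      have : φbar (mk (FreeMonoid.of (Sum.inr x))) = (1, FreeMonoid.of x) := by
        simp [hφbar, hmk, hφ]
      rw [this, Prod.ext_iff]
      simp
  refine ⟨MulEquiv.mk' ⟨φbar.toFun, ψ.toFun, ?_, ?_⟩ φbar.map_mul⟩
  · intro q
    induction q using Con.induction_on with
    | H w =>
      have : φbar (w : (traceCon D).Quotient) = φ w := Con.lift_mk' hker w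
      show ψ (φbar w) = w
      rw [this]; exact hleft w
  · rintro ⟨u, v⟩
    have : ψ (u, v) = f u * g v := rfl
    simp only [MonoidHom.toFun_eq_coe, this, map_mul, hrf u, hrg v, Prod.mk_mul_mk,
      one_mul, mul_one]
end

section
/- Let W = A₁⋯Aₙ be a word in extended Foata normal form and x, y traces. Then x·y = [W] if and only if there exist sets B_i ⊆ A_i for i ∈ [n] such that: (a) the word (A₁∖B₁)(A₂∖B₂)⋯(Aₙ∖Bₙ) is in extended Foata normal form, (b) B_i ∥ (A_j∖B_j) for all 1 ≤ i < j ≤ n, and (c) x = [(A₁∖B₁)⋯(Aₙ∖Bₙ)] and y = [B₁⋯Bₙ]. -/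
/-- A finite set of letters is independent if its distinct elements are pairwise
independent. -/
def IndepSet {α : Type*} (D : α → α → Prop) (A : Finset α) : Prop :=
  ∀ a ∈ A, ∀ b ∈ A, a ≠ b → Indep D a b

/-- `D(A)`: the set of letters dependent on some letter of `A`. -/
def DepSet {α : Type*} (D : α → α → Prop) (A : Finset α) : Set α :=
  {b | ∃ a ∈ A, D a b}

/-- A word over the alphabet of (independent) subsets of `Σ` is in extended Foata
normal form if each letter is contained in `D` of its predecessor. -/
def eFNF {α : Type*} (D : α → α → Prop) (W : List (Finset α)) : Prop :=
  W.Chain' (fun A B => ↑B ⊆ DepSet D A)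

/-- The trace induced by a word over subsets of `Σ` (the homomorphism `[·] : F* → M`). -/
noncomputable def traceOf {α : Type*} (D : α → α → Prop) (W : List (Finset α)) :
    (traceCon D).Quotient :=
  (traceCon D).mk' (FreeMonoid.ofList (W.flatMap Finset.toList))

/-- `X ∥ Y`: every letter of `X` is independent of every letter of `Y`. -/
def Par {α : Type*} (D : α → α → Prop) (X Y : Finset α) : Prop :=
  ∀ a ∈ X, ∀ b ∈ Y, Indep D a b


set_option linter.unusedSectionVars false

namespace Tr
variable {α : Type*} [DecidableEq α] (D : α → α → Prop)

/-- projection onto the pair {a,b} -/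
def proj (a b : α) (w : List α) : List α := w.filter (fun c => c = a ∨ c = b)

def eqv (u v : List α) : Prop := ∀ a b, D a b → proj a b u = proj a b v

variable {D}

theorem eqv_refl (u : List α) : eqv D u u := fun _ _ _ => rfl
theorem eqv_symm {u v} (h : eqv D u v) : eqv D v u := fun a b hd => (h a b hd).symm
theorem eqv_trans {u v w} (h : eqv D u v) (h' : eqv D v w) : eqv D u w :=
  fun a b hd => (h a b hd).trans (h' a b hd)

theorem proj_append (a b : α) (u v : List α) :
    proj a b (u ++ v) = proj a b u ++ proj a b v := List.filter_append ..

theorem eqv_append {u v w z} (h : eqv D u v) (h' : eqv D w z) :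
    eqv D (u ++ w) (v ++ z) := by
  intro a b hd; rw [proj_append, proj_append, h a b hd, h' a b hd]

theorem eqv_cons (a : α) {u v} (h : eqv D u v) : eqv D (a :: u) (a :: v) :=
  eqv_append (u := [a]) (v := [a]) (eqv_refl _) h

theorem length_proj_self (a : α) (u : List α) :
    (proj a a u).length = u.count a := by
  unfold proj
  rw [List.count, List.countP_eq_length_filter]
  congr 1
  apply List.filter_congr
  intro c _
  simp only [or_self]
  rw [Bool.eq_iff_iff]
  simp only [beq_iff_eq, decide_eq_true_eq]

theorem count_eq_of_eqv (hrefl : ∀ a, D a a) {u v} (h : eqv D u v) (a : α) :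
    u.count a = v.count a := by
  rw [← length_proj_self a u, ← length_proj_self a v, h a a (hrefl a)]

theorem mem_of_eqv (hrefl : ∀ a, D a a) {u v} (h : eqv D u v) {a : α} (ha : a ∈ u) :
    a ∈ v := by
  have := count_eq_of_eqv hrefl h a
  have h1 : 0 < u.count a := List.count_pos_iff.2 ha
  exact List.count_pos_iff.1 (this ▸ h1)

/-- a first split at the first occurrence -/
theorem first_split {a : α} {l : List α} (h : a ∈ l) :
    ∃ s t, l = s ++ a :: t ∧ a ∉ s := by
  induction l with
  | nil => simp at h
  | cons b l ih =>
    by_cases hb : a = b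
    · exact ⟨[], l, by simp [hb], by simp⟩
    · rcases ih (by rcases List.mem_cons.1 h with h' | h'; exact absurd h' hb; exact h') with ⟨s, t, rfl, hs⟩
      exact ⟨b :: s, t, rfl, by simp [hs, hb]⟩
end Tr
namespace Tr
variable {α : Type*} [DecidableEq α] {D : α → α → Prop}

theorem proj_eq_nil {a b : α} {t : List α} (h : ∀ e ∈ t, e ≠ a ∧ e ≠ b) :
    proj a b t = [] := by
  simp only [proj, List.filter_eq_nil_iff, decide_eq_true_eq]
  intro e he
  rcases h e he with ⟨h1, h2⟩
  simp [h1, h2]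

theorem proj_cons_of_ne {a b c : α} (m : List α) (h1 : c ≠ a) (h2 : c ≠ b) :
    proj a b (c :: m) = proj a b m := by
  simp only [proj, List.filter_cons]
  rw [if_neg (by simp [h1, h2])]

theorem proj_cons_left (a b : α) (m : List α) :
    proj a b (a :: m) = a :: proj a b m := by
  simp [proj, List.filter_cons]

theorem proj_cons_right (a b : α) (m : List α) :
    proj a b (b :: m) = b :: proj a b m := by
  simp [proj, List.filter_cons]

theorem mem_of_mem_proj {a b c : α} {m : List α} (h : c ∈ proj a b m) : c ∈ m :=
  List.mem_of_mem_filter h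

theorem mem_proj_of_mem_left {a b : α} {m : List α} (h : a ∈ m) : a ∈ proj a b m :=
  List.mem_filter.2 ⟨h, by simp⟩

theorem mem_proj_of_mem_right {a b : α} {m : List α} (h : b ∈ m) : b ∈ proj a b m :=
  List.mem_filter.2 ⟨h, by simp⟩

/-- Letters strictly before the (first) occurrence of the head letter are independent of it. -/
theorem indep_of_head {a : α} {m t₁ t₂ : List α}
    (h : eqv D (a :: m) (t₁ ++ a :: t₂)) (hna : a ∉ t₁) :
    ∀ c ∈ t₁, Indep D a c := by
  intro c hc
  have hne : a ≠ c := fun h' => hna (h' ▸ hc)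
  refine ⟨hne, fun hD => ?_⟩
  have heq := h a c hD
  rw [proj_cons_left, proj_append, proj_cons_left] at heq
  have hmem : c ∈ proj a c t₁ := mem_proj_of_mem_right hc
  cases hL : proj a c t₁ with
  | nil => rw [hL] at hmem; simp at hmem
  | cons d l =>
    rw [hL] at heq
    have hd : d = a := by
      have := congrArg List.head? heq
      simpa using this.symm
    have : d ∈ t₁ := mem_of_mem_proj (hL ▸ List.mem_cons_self (a := d) (l := l))
    exact hna (hd ▸ this)

/-- Cancelling the head letter against its occurrence after an independent prefix. -/
theorem eqv_cons_cancel (hsymm : ∀ a b, D a b → D b a) {a : α} {m t₁ t₂ : List α}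
    (hind : ∀ c ∈ t₁, Indep D a c) (h : eqv D (a :: m) (t₁ ++ a :: t₂)) :
    eqv D m (t₁ ++ t₂) := by
  intro c d hD
  have heq := h c d hD
  rw [proj_append] at heq
  rw [proj_append]
  by_cases ha : a = c ∨ a = d
  · have hnil : proj c d t₁ = [] := by
      apply proj_eq_nil
      intro e he
      rcases hind e he with ⟨hne, hnD⟩
      refine ⟨fun hec => ?_, fun hed => ?_⟩
      · rcases ha with ha | ha
        · exact hne (ha.trans hec.symm)
        · exact hnD (by rw [ha, hec]; exact hsymm _ _ hD)
      · rcases ha with ha | ha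
        · exact hnD (by rw [ha, hed]; exact hD)
        · exact hne (ha.trans hed.symm)
    have hpa : proj c d (a :: m) = a :: proj c d m := by
      rcases ha with rfl | rfl
      · exact proj_cons_left ..
      · exact proj_cons_right ..
    have hpt : proj c d (a :: t₂) = a :: proj c d t₂ := by
      rcases ha with rfl | rfl
      · exact proj_cons_left ..
      · exact proj_cons_right ..
    rw [hpa, hpt, hnil, List.nil_append] at heq
    rw [hnil, List.nil_append]
    exact (List.cons.injEq .. ▸ heq).2
  · push_neg at ha
    have hpa : proj c d (a :: m) = proj c d m :=
      proj_cons_of_ne _ ha.1 ha.2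
    have hpt : proj c d (a :: t₂) = proj c d t₂ :=
      proj_cons_of_ne _ ha.1 ha.2
    rw [hpa, hpt] at heq
    exact heq

/-- Moving a letter left across an independent prefix, as an `eqv`. -/
theorem eqv_cons_move (hsymm : ∀ a b, D a b → D b a) {a : α} {t₁ t₂ : List α}
    (hind : ∀ c ∈ t₁, Indep D a c) :
    eqv D (a :: (t₁ ++ t₂)) (t₁ ++ a :: t₂) := by
  have h0 : eqv D (a :: (t₁ ++ t₂)) (a :: (t₁ ++ t₂)) := eqv_refl _
  intro c d hD
  by_cases ha : a = c ∨ a = d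
  · have hnil : proj c d t₁ = [] := by
      apply proj_eq_nil
      intro e he
      rcases hind e he with ⟨hne, hnD⟩
      refine ⟨fun hec => ?_, fun hed => ?_⟩
      · rcases ha with ha | ha
        · exact hne (ha.trans hec.symm)
        · exact hnD (by rw [ha, hec]; exact hsymm _ _ hD)
      · rcases ha with ha | ha
        · exact hnD (by rw [ha, hed]; exact hD)
        · exact hne (ha.trans hed.symm)
    have hpa : ∀ l, proj c d (a :: l) = a :: proj c d l := by
      intro l
      rcases ha with rfl | rfl
      · exact proj_cons_left ..
      · exact proj_cons_right ..
    rw [hpa, proj_append, proj_append, hpa, hnil]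
    simp
  · push_neg at ha
    have hpa : ∀ l, proj c d (a :: l) = proj c d l := fun l =>
      proj_cons_of_ne _ ha.1 ha.2
    rw [hpa, proj_append, proj_append, hpa]

end Tr
namespace Tr
variable {α : Type*} [DecidableEq α] (D : α → α → Prop)

def tc (u v : List α) : Prop :=
  traceCon D (FreeMonoid.ofList u) (FreeMonoid.ofList v)

variable {D}

theorem tc_refl (u : List α) : tc D u u := (traceCon D).refl _
theorem tc_symm {u v} (h : tc D u v) : tc D v u := (traceCon D).symm h
theorem tc_trans {u v w} (h : tc D u v) (h' : tc D v w) : tc D u w := (traceCon D).trans h h'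

theorem tc_append {u v w z} (h : tc D u v) (h' : tc D w z) : tc D (u ++ w) (v ++ z) :=
  (traceCon D).mul h h'

theorem tc_swap {a b : α} (hab : Indep D a b) (t : List α) :
    tc D (a :: b :: t) (b :: a :: t) := by
  have h1 : tc D [a, b] [b, a] := ConGen.Rel.of _ _ ⟨a, b, hab, rfl, rfl⟩
  exact tc_append h1 (tc_refl t)

theorem tc_cons (a : α) {u v} (h : tc D u v) : tc D (a :: u) (a :: v) :=
  tc_append (tc_refl [a]) h

theorem tc_move {a : α} {t₁ : List α} (hind : ∀ c ∈ t₁, Indep D a c) (t₂ : List α) :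
    tc D (a :: (t₁ ++ t₂)) (t₁ ++ a :: t₂) := by
  induction t₁ with
  | nil => exact tc_refl _
  | cons b t₁' ih =>
    have h1 : tc D (a :: b :: (t₁' ++ t₂)) (b :: a :: (t₁' ++ t₂)) :=
      tc_swap (hind b (List.mem_cons_self (a := b) (l := t₁'))) _
    have h2 : tc D (b :: (a :: (t₁' ++ t₂))) (b :: (t₁' ++ a :: t₂)) :=
      tc_cons b (ih (fun c hc => hind c (List.mem_cons_of_mem _ hc)))
    exact tc_trans h1 h2

/-- `eqv` is a congruence containing the generators, so `tc` implies `eqv`. -/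
theorem eqv_of_tc (hsymm : ∀ a b, D a b → D b a) {u v} (h : tc D u v) : eqv D u v := by
  let E : Con (FreeMonoid α) :=
    { r := fun u v => eqv D u.toList v.toList
      iseqv := ⟨fun _ => eqv_refl _, eqv_symm, eqv_trans⟩
      mul' := fun h h' => eqv_append h h' }
  have hle : traceCon D ≤ E := by
    apply Con.conGen_le.2
    rintro x y ⟨a, b, hab, rfl, rfl⟩
    show eqv D [a, b] [b, a]
    have := eqv_cons_move (D := D) hsymm (a := a) (t₁ := [b]) (t₂ := [])
      (fun c hc => by rw [List.mem_singleton] at hc; subst hc; exact hab)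
    simpa using this
  exact hle h

theorem tc_of_eqv (hrefl : ∀ a, D a a) (hsymm : ∀ a b, D a b → D b a)
    {u v : List α} (h : eqv D u v) : tc D u v := by
  induction u generalizing v with
  | nil =>
    cases v with
    | nil => exact tc_refl _
    | cons b t =>
      exfalso
      have := h b b (hrefl b)
      rw [proj_cons_left] at this
      exact List.cons_ne_nil _ _ this.symm
  | cons a m ih =>
    have ha : a ∈ v := mem_of_eqv hrefl h (List.mem_cons_self (a := a) (l := m))
    obtain ⟨v₁, v₂, rfl, hnv⟩ := first_split ha
    have hind := indep_of_head h hnv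
    have h2 : eqv D m (v₁ ++ v₂) := eqv_cons_cancel hsymm hind h
    have h3 : tc D (a :: m) (a :: (v₁ ++ v₂)) := tc_cons a (ih h2)
    exact tc_trans h3 (tc_move hind v₂)

theorem tc_iff_eqv (hrefl : ∀ a, D a a) (hsymm : ∀ a b, D a b → D b a)
    {u v : List α} : tc D u v ↔ eqv D u v :=
  ⟨eqv_of_tc hsymm, tc_of_eqv hrefl hsymm⟩

end Tr
namespace Tr
variable {α : Type*} [DecidableEq α] {D : α → α → Prop}

theorem eqv_comm (hsymm : ∀ a b, D a b → D b a) {u w : List α}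
    (hind : ∀ a ∈ u, ∀ b ∈ w, Indep D a b) : eqv D (u ++ w) (w ++ u) := by
  intro c d hD
  rw [proj_append, proj_append]
  by_cases hu : proj c d u = []
  · rw [hu, List.append_nil, List.nil_append]
  · obtain ⟨f, hf⟩ := List.exists_mem_of_ne_nil _ hu
    have hfu : f ∈ u := mem_of_mem_proj hf
    have hfcd : f = c ∨ f = d := by
      have := List.of_mem_filter hf
      simpa using this
    have hw : proj c d w = [] := by
      apply proj_eq_nil
      intro e he
      rcases hind f hfu e he with ⟨hne, hnD⟩
      refine ⟨fun hec => ?_, fun hed => ?_⟩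
      · rcases hfcd with hf' | hf'
        · exact hne (hf'.trans hec.symm)
        · exact hnD (by rw [hf', hec]; exact hsymm _ _ hD)
      · rcases hfcd with hf' | hf'
        · exact hnD (by rw [hf', hed]; exact hD)
        · exact hne (hf'.trans hed.symm)
    rw [hw, List.append_nil, List.nil_append]

theorem eqv_of_perm (hsymm : ∀ a b, D a b → D b a) {l₁ l₂ : List α}
    (hperm : l₁.Perm l₂) (hcl : ∀ c ∈ l₁, ∀ d ∈ l₁, c ≠ d → Indep D c d) :
    eqv D l₁ l₂ := by
  intro a b hD
  have hp : (proj a b l₁).Perm (proj a b l₂) := hperm.filter _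
  rcases hn : proj a b l₁ with _ | ⟨c, l⟩
  · rw [hn] at hp
    exact (hp.symm.eq_nil).symm
  · have hcmem : c ∈ proj a b l₁ := hn ▸ List.mem_cons_self (a := c) (l := l)
    have hall : ∀ x ∈ proj a b l₁, x = c := by
      intro x hx
      by_contra hne
      have hx1 : x ∈ l₁ := mem_of_mem_proj hx
      have hc1 : c ∈ l₁ := mem_of_mem_proj hcmem
      rcases hcl x hx1 c hc1 hne with ⟨_, hnD⟩
      have hxab : x = a ∨ x = b := by have := List.of_mem_filter hx; simpa using this
      have hcab : c = a ∨ c = b := by have := List.of_mem_filter hcmem; simpa using this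
      rcases hxab with rfl | rfl <;> rcases hcab with rfl | rfl
      · exact hne rfl
      · exact hnD hD
      · exact hnD (hsymm _ _ hD)
      · exact hne rfl
    have hall2 : ∀ x ∈ proj a b l₂, x = c := fun x hx => hall x (hp.symm.subset hx)
    have h1 : proj a b l₁ = List.replicate (proj a b l₁).length c :=
      List.eq_replicate_length.2 hall
    have h2 : proj a b l₂ = List.replicate (proj a b l₂).length c :=
      List.eq_replicate_length.2 hall2
    rw [← hn, h1, h2, hp.length_eq]

/-- Levi's lemma for traces, at the level of `eqv`. -/
theorem levi (hrefl : ∀ a, D a a) (hsymm : ∀ a b, D a b → D b a)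
    {u v : List α} : ∀ {w z : List α}, eqv D (u ++ v) (w ++ z) →
    ∃ p q r s, eqv D u (p ++ q) ∧ eqv D v (r ++ s) ∧ eqv D w (p ++ r) ∧
      eqv D z (q ++ s) ∧ ∀ a ∈ q, ∀ b ∈ r, Indep D a b := by
  induction u with
  | nil =>
    intro w z h
    exact ⟨[], [], w, z, eqv_refl _, h, eqv_refl _, eqv_refl _, by simp⟩
  | cons a u' ih =>
    intro w z h
    have ha : a ∈ w ++ z := mem_of_eqv hrefl h (List.mem_cons_self (a := a))
    by_cases haw : a ∈ w
    · obtain ⟨w₁, w₂, rfl, hnw⟩ := first_split haw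
      have h' : eqv D (a :: (u' ++ v)) (w₁ ++ a :: (w₂ ++ z)) := by
        rwa [List.append_assoc] at h
      have hind := indep_of_head h' hnw
      have h2 : eqv D (u' ++ v) ((w₁ ++ w₂) ++ z) := by
        have := eqv_cons_cancel hsymm hind h'
        rwa [← List.append_assoc] at this
      obtain ⟨p, q, r, s, hu, hv, hw, hz, hqr⟩ := ih h2
      refine ⟨a :: p, q, r, s, eqv_cons a hu, hv, ?_, hz, hqr⟩
      have hm : eqv D (a :: (w₁ ++ w₂)) (w₁ ++ a :: w₂) := eqv_cons_move hsymm hind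
      exact eqv_trans (eqv_symm hm) (eqv_cons a hw)
    · have haz : a ∈ z := (List.mem_append.1 ha).resolve_left haw
      obtain ⟨z₁, z₂, rfl, hnz⟩ := first_split haz
      have hna : a ∉ w ++ z₁ := by
        rw [List.mem_append]; rintro (h1 | h1); exact haw h1; exact hnz h1
      have h' : eqv D (a :: (u' ++ v)) ((w ++ z₁) ++ a :: z₂) := by
        rwa [← List.append_assoc] at h
      have hind := indep_of_head h' hna
      have h2 : eqv D (u' ++ v) (w ++ (z₁ ++ z₂)) := by
        have := eqv_cons_cancel hsymm hind h'
        rwa [List.append_assoc] at this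
      obtain ⟨p, q, r, s, hu, hv, hw, hz, hqr⟩ := ih h2
      have hmemw : ∀ c, c ∈ p ++ r → c ∈ w := fun c hc => mem_of_eqv hrefl (eqv_symm hw) hc
      have hindp : ∀ c ∈ p, Indep D a c := fun c hc =>
        hind c (List.mem_append_left _ (hmemw c (List.mem_append_left _ hc)))
      have hindr : ∀ c ∈ r, Indep D a c := fun c hc =>
        hind c (List.mem_append_left _ (hmemw c (List.mem_append_right _ hc)))
      have hindz : ∀ c ∈ z₁, Indep D a c := fun c hc =>
        hind c (List.mem_append_right _ hc)
      refine ⟨p, a :: q, r, s, ?_, hv, hw, ?_, ?_⟩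
      · exact eqv_trans (eqv_cons a hu) (eqv_cons_move hsymm hindp)
      · have h3 : eqv D (a :: (z₁ ++ z₂)) (z₁ ++ a :: z₂) := eqv_cons_move hsymm hindz
        exact eqv_trans (eqv_symm h3) (eqv_cons a hz)
      · intro x hx b hb
        rcases List.mem_cons.1 hx with rfl | hx'
        · exact hindr b hb
        · exact hqr x hx' b hb
end Tr
namespace Tr
variable {α : Type*} [DecidableEq α] {D : α → α → Prop}

theorem indep_symm (hsymm : ∀ a b, D a b → D b a) {a b : α} (h : Indep D a b) :
    Indep D b a := ⟨h.1.symm, fun hD => h.2 (hsymm _ _ hD)⟩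

/-- Splitting a clique trace into two parts given by a subset. -/
theorem clique_split (hrefl : ∀ a, D a a) (hsymm : ∀ a b, D a b → D b a)
    {A : Finset α} (hA : IndepSet D A) {p r : List α}
    (h : eqv D A.toList (p ++ r)) :
    ∃ B : Finset α, B ⊆ A ∧ eqv D p ((A \ B).toList) ∧ eqv D r B.toList := by
  have hcnt : ∀ c, p.count c + r.count c = A.toList.count c := by
    intro c
    have := count_eq_of_eqv hrefl (eqv_symm h) c
    rwa [List.count_append] at this
  have hA1 : ∀ c, A.toList.count c ≤ 1 :=
    List.nodup_iff_count_le_one.1 A.nodup_toList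
  have hpr_mem : ∀ c, c ∈ p ∨ c ∈ r → c ∈ A := by
    intro c hc
    have h1 : 0 < p.count c + r.count c := by
      rcases hc with hc | hc
      · exact Nat.lt_of_lt_of_le (List.count_pos_iff.2 hc) (Nat.le_add_right _ _)
      · exact Nat.lt_of_lt_of_le (List.count_pos_iff.2 hc) (Nat.le_add_left _ _)
    rw [hcnt] at h1
    exact Finset.mem_toList.1 (List.count_pos_iff.1 h1)
  have hnotboth : ∀ c, c ∈ p → c ∈ r → False := by
    intro c hcp hcr
    have : 2 ≤ p.count c + r.count c :=
      Nat.add_le_add (List.count_pos_iff.2 hcp) (List.count_pos_iff.2 hcr)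
    have := Nat.le_trans this (Nat.le_of_eq (hcnt c))
    exact absurd (Nat.le_trans this (hA1 c)) (by norm_num)
  have hpnd : p.Nodup := by
    rw [List.nodup_iff_count_le_one]
    intro c
    calc p.count c ≤ p.count c + r.count c := Nat.le_add_right _ _
    _ = A.toList.count c := hcnt c
    _ ≤ 1 := hA1 c
  have hrnd : r.Nodup := by
    rw [List.nodup_iff_count_le_one]
    intro c
    calc r.count c ≤ p.count c + r.count c := Nat.le_add_left _ _
    _ = A.toList.count c := hcnt c
    _ ≤ 1 := hA1 c
  refine ⟨A.filter (· ∈ r), Finset.filter_subset _ _, ?_, ?_⟩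
  · -- p ↔ A \ B
    have hmem : ∀ c, c ∈ p ↔ c ∈ (A \ A.filter (· ∈ r)).toList := by
      intro c
      rw [Finset.mem_toList, Finset.mem_sdiff, Finset.mem_filter]
      constructor
      · intro hc
        exact ⟨hpr_mem c (Or.inl hc), fun hcf => hnotboth c hc hcf.2⟩
      · rintro ⟨hcA, hcf⟩
        have hcr : c ∉ r := fun hr => hcf ⟨hcA, hr⟩
        have h1 := hcnt c
        rw [List.count_eq_zero_of_not_mem hcr, Nat.add_zero,
          List.count_eq_one_of_mem A.nodup_toList (Finset.mem_toList.2 hcA)] at h1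
        exact List.count_pos_iff.1 (by omega)
    have hperm : p.Perm (A \ A.filter (· ∈ r)).toList := by
      rw [List.perm_iff_count]
      intro c
      by_cases hc : c ∈ p
      · rw [List.count_eq_one_of_mem hpnd hc,
          List.count_eq_one_of_mem (Finset.nodup_toList _) ((hmem c).1 hc)]
      · rw [List.count_eq_zero_of_not_mem hc,
          List.count_eq_zero_of_not_mem (fun h' => hc ((hmem c).2 h'))]
    exact eqv_of_perm hsymm hperm
      (fun c hc d hd hne => hA c (hpr_mem c (Or.inl hc)) d (hpr_mem d (Or.inl hd)) hne)
  · -- r ↔ B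
    have hmem : ∀ c, c ∈ r ↔ c ∈ (A.filter (· ∈ r)).toList := by
      intro c
      rw [Finset.mem_toList, Finset.mem_filter]
      exact ⟨fun hc => ⟨hpr_mem c (Or.inr hc), hc⟩, fun hc => hc.2⟩
    have hperm : r.Perm (A.filter (· ∈ r)).toList := by
      rw [List.perm_iff_count]
      intro c
      by_cases hc : c ∈ r
      · rw [List.count_eq_one_of_mem hrnd hc,
          List.count_eq_one_of_mem (Finset.nodup_toList _) ((hmem c).1 hc)]
      · rw [List.count_eq_zero_of_not_mem hc,
          List.count_eq_zero_of_not_mem (fun h' => hc ((hmem c).2 h'))]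
    exact eqv_of_perm hsymm hperm
      (fun c hc d hd hne => hA c (hpr_mem c (Or.inr hc)) d (hpr_mem d (Or.inr hd)) hne)

/-- Membership in the flattening of a zipWith-sdiff word. -/
theorem mem_flat_iff {W Bs : List (Finset α)} (hlen : Bs.length = W.length) {c : α} :
    c ∈ (List.zipWith (· \ ·) W Bs).flatMap Finset.toList ↔
      ∃ j, j < W.length ∧ c ∈ W.getD j ∅ \ Bs.getD j ∅ := by
  rw [List.mem_flatMap]
  constructor
  · rintro ⟨X, hX, hcX⟩
    obtain ⟨j, hj, hXj⟩ := List.mem_iff_getElem.1 hX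
    rw [List.length_zipWith, hlen, Nat.min_self] at hj
    refine ⟨j, hj, ?_⟩
    rw [List.getElem_zipWith] at hXj
    rw [List.getD_eq_getElem _ _ hj, List.getD_eq_getElem _ _ (hlen ▸ hj)]
    rw [hXj]
    exact Finset.mem_toList.1 hcX
  · rintro ⟨j, hj, hc⟩
    have hj' : j < (List.zipWith (· \ ·) W Bs).length := by
      rw [List.length_zipWith, hlen, Nat.min_self]; exact hj
    refine ⟨(List.zipWith (· \ ·) W Bs)[j], List.getElem_mem hj', ?_⟩
    rw [Finset.mem_toList, List.getElem_zipWith]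
    rwa [List.getD_eq_getElem _ _ hj, List.getD_eq_getElem _ _ (hlen ▸ hj)] at hc

theorem mem_flat_simple {Bs : List (Finset α)} {c : α} :
    c ∈ Bs.flatMap Finset.toList ↔ ∃ X ∈ Bs, c ∈ X := by
  rw [List.mem_flatMap]
  constructor
  · rintro ⟨X, hX, hcX⟩; exact ⟨X, hX, Finset.mem_toList.1 hcX⟩
  · rintro ⟨X, hX, hcX⟩; exact ⟨X, hX, Finset.mem_toList.2 hcX⟩

end Tr
namespace Tr
variable {α : Type*} [DecidableEq α] {D : α → α → Prop}

theorem main_fwd (hrefl : ∀ a, D a a) (hsymm : ∀ a b, D a b → D b a) :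
    ∀ (W : List (Finset α)) (u v : List α), (∀ A ∈ W, IndepSet D A) → eFNF D W →
    eqv D (u ++ v) (W.flatMap Finset.toList) →
    ∃ Bs : List (Finset α), Bs.length = W.length ∧
      (∀ i, Bs.getD i ∅ ⊆ W.getD i ∅) ∧
      eFNF D (List.zipWith (· \ ·) W Bs) ∧
      (∀ i j, i < j → j < W.length →
        Par D (Bs.getD i ∅) (W.getD j ∅ \ Bs.getD j ∅)) ∧
      eqv D u ((List.zipWith (· \ ·) W Bs).flatMap Finset.toList) ∧
      eqv D v (Bs.flatMap Finset.toList) := by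
  intro W
  induction W with
  | nil =>
    intro u v _ _ h
    simp only [List.flatMap_nil] at h
    have hu : eqv D u [] := by
      intro a b hD
      have := h a b hD
      rw [proj_append] at this
      exact (List.append_eq_nil_iff.1 this).1
    have hv : eqv D v [] := by
      intro a b hD
      have := h a b hD
      rw [proj_append] at this
      exact (List.append_eq_nil_iff.1 this).2
    exact ⟨[], rfl, fun i => by simp, List.isChain_nil, fun i j _ hj => by simp at hj,
      by simpa using hu, by simpa using hv⟩
  | cons A W' ih =>
    intro u v hind hfnf h
    simp only [List.flatMap_cons] at h
    obtain ⟨p, q, r, s, hu, hv, hw, hz, hqr⟩ := levi hrefl hsymm h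
    obtain ⟨B, hBsub, hp, hr⟩ :=
      clique_split hrefl hsymm (hind A (List.mem_cons_self (a := A) (l := W'))) hw
    obtain ⟨Bs', len', sub', efnf', par', hq, hs⟩ :=
      ih q s (fun X hX => hind X (List.mem_cons_of_mem _ hX))
        (List.isChain_cons.1 hfnf).2 (eqv_symm hz)
    refine ⟨B :: Bs', by simp [len'], ?_, ?_, ?_, ?_, ?_⟩
    · intro i
      cases i with
      | zero => simpa using hBsub
      | succ i => simpa using sub' i
    · -- eFNF of (A \ B) :: zipWith
      show List.Chain' _ ((A \ B) :: List.zipWith (· \ ·) W' Bs')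
      refine List.isChain_cons.2 ⟨?_, efnf'⟩
      intro Y hY
      cases W' with
      | nil => simp at hY
      | cons A₂ W'' =>
        cases Bs' with
        | nil => simp at len'
        | cons B₂ Bs'' =>
          simp only [List.zipWith_cons_cons, List.head?_cons, Option.mem_def,
            Option.some.injEq] at hY
          subst hY
          intro c hc
          rw [Finset.mem_coe, Finset.mem_sdiff] at hc
          obtain ⟨hcA₂, hcB₂⟩ := hc
          have hA₂sub : ↑A₂ ⊆ DepSet D A := (List.isChain_cons_cons.1 hfnf).1
          obtain ⟨e, heA, hDec⟩ := hA₂sub hcA₂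
          -- c is a letter of q
          have hcq : c ∈ q := by
            apply mem_of_eqv hrefl (eqv_symm hq)
            exact List.mem_flatMap.2 ⟨A₂ \ B₂, List.mem_cons_self,
              Finset.mem_toList.2 (Finset.mem_sdiff.2 ⟨hcA₂, hcB₂⟩)⟩
          have heB : e ∉ B := by
            intro heB
            have her : e ∈ r :=
              mem_of_eqv hrefl (eqv_symm hr) (Finset.mem_toList.2 heB)
            exact (hqr c hcq e her).2 (hsymm _ _ hDec)
          exact ⟨e, Finset.mem_sdiff.2 ⟨heA, heB⟩, hDec⟩
    · -- Par condition
      intro i j hij hjlen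
      cases j with
      | zero => omega
      | succ j =>
        have hjW : j < W'.length := by simpa using hjlen
        cases i with
        | zero =>
          simp only [List.getD_cons_zero, List.getD_cons_succ]
          intro a haB b hb
          have hbq : b ∈ q := by
            apply mem_of_eqv hrefl (eqv_symm hq)
            exact (mem_flat_iff len').2 ⟨j, hjW, hb⟩
          have har : a ∈ r :=
            mem_of_eqv hrefl (eqv_symm hr) (Finset.mem_toList.2 haB)
          exact indep_symm hsymm (hqr b hbq a har)
        | succ i =>
          simp only [List.getD_cons_succ]
          exact par' i j (by omega) hjW
    · simp only [List.zipWith_cons_cons, List.flatMap_cons]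
      exact eqv_trans hu (eqv_append hp hq)
    · simp only [List.flatMap_cons]
      exact eqv_trans hv (eqv_append hr hs)

theorem main_bwd (hrefl : ∀ a, D a a) (hsymm : ∀ a b, D a b → D b a) :
    ∀ (W Bs : List (Finset α)), (∀ A ∈ W, IndepSet D A) → Bs.length = W.length →
    (∀ i, Bs.getD i ∅ ⊆ W.getD i ∅) →
    (∀ i j, i < j → j < W.length →
      Par D (Bs.getD i ∅) (W.getD j ∅ \ Bs.getD j ∅)) →
    eqv D ((List.zipWith (· \ ·) W Bs).flatMap Finset.toList ++
        Bs.flatMap Finset.toList)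
      (W.flatMap Finset.toList) := by
  intro W
  induction W with
  | nil =>
    intro Bs _ hlen _ _
    rw [List.length_eq_zero_iff.1 hlen]
    exact eqv_refl _
  | cons A W' ih =>
    intro Bs hind hlen hsub hpar
    cases Bs with
    | nil => simp at hlen
    | cons B Bs' =>
      have len' : Bs'.length = W'.length := by simpa using hlen
      have hBsub : B ⊆ A := by simpa using hsub 0
      -- abbreviations
      set X := (A \ B).toList with hX
      set Y := (List.zipWith (· \ ·) W' Bs').flatMap Finset.toList with hY
      set Z := B.toList with hZ
      set T := Bs'.flatMap Finset.toList with hT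
      have s1 : eqv D (Y ++ Z) (Z ++ Y) := by
        apply eqv_comm hsymm
        intro a haY b hbZ
        obtain ⟨j, hj, haj⟩ := (mem_flat_iff len').1 haY
        have hbB : b ∈ B := Finset.mem_toList.1 hbZ
        have := hpar 0 (j + 1) (Nat.succ_pos j) (by simpa using hj)
        simp only [List.getD_cons_zero, List.getD_cons_succ] at this
        exact indep_symm hsymm (this b hbB a haj)
      have s2 : eqv D (X ++ Z) A.toList := by
        apply eqv_of_perm hsymm
        · rw [← Multiset.coe_eq_coe]
          show ((A \ B).toList : Multiset α) + (B.toList : Multiset α) = _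
          rw [Finset.coe_toList, Finset.coe_toList, Finset.coe_toList,
            Finset.sdiff_val, tsub_add_cancel_of_le (Finset.val_le_iff.2 hBsub)]
        · intro c hc d hd hne
          have hcA : c ∈ A := by
            rcases List.mem_append.1 hc with h' | h'
            · exact Finset.mem_sdiff.1 (Finset.mem_toList.1 h') |>.1
            · exact hBsub (Finset.mem_toList.1 h')
          have hdA : d ∈ A := by
            rcases List.mem_append.1 hd with h' | h'
            · exact Finset.mem_sdiff.1 (Finset.mem_toList.1 h') |>.1
            · exact hBsub (Finset.mem_toList.1 h')
          exact hind A (List.mem_cons_self (a := A) (l := W')) c hcA d hdA hne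
      have s3 : eqv D (Y ++ T) (W'.flatMap Finset.toList) := by
        apply ih Bs' (fun X hX => hind X (List.mem_cons_of_mem _ hX)) len'
        · intro i
          have := hsub (i + 1)
          simpa using this
        · intro i j hij hj
          have := hpar (i + 1) (j + 1) (by omega) (by simpa using hj)
          simpa using this
      have e1 : eqv D ((Y ++ Z) ++ T) ((Z ++ Y) ++ T) := eqv_append s1 (eqv_refl T)
      have e2 : eqv D (X ++ ((Y ++ Z) ++ T)) (X ++ ((Z ++ Y) ++ T)) :=
        eqv_append (eqv_refl X) e1
      have e3 : eqv D ((X ++ Z) ++ (Y ++ T)) (A.toList ++ W'.flatMap Finset.toList) :=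
        eqv_append s2 s3
      show eqv D ((X ++ Y) ++ (Z ++ T)) ((A :: W').flatMap Finset.toList)
      simp only [List.flatMap_cons]
      simp only [List.append_assoc] at e2 e3 ⊢
      exact eqv_trans e2 e3

end Tr

/-- Factorisations of the trace of a word `W = A₁⋯Aₙ` in extended Foata normal form:
`x·y = [W]` iff there are `Bᵢ ⊆ Aᵢ` with (a) `(A₁∖B₁)⋯(Aₙ∖Bₙ)` in extended Foata
normal form, (b) `Bᵢ ∥ (Aⱼ∖Bⱼ)` for `i < j`, and (c) `x = [(A₁∖B₁)⋯(Aₙ∖Bₙ)]` and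
`y = [B₁⋯Bₙ]`. -/
theorem stmt10 {α : Type*} [DecidableEq α] (D : α → α → Prop)
    (hrefl : ∀ a, D a a) (hsymm : ∀ a b, D a b → D b a)
    (W : List (Finset α)) (hWind : ∀ A ∈ W, IndepSet D A) (hW : eFNF D W)
    (x y : (traceCon D).Quotient) :
    x * y = traceOf D W ↔
      ∃ Bs : List (Finset α), Bs.length = W.length ∧
        (∀ i, Bs.getD i ∅ ⊆ W.getD i ∅) ∧
        eFNF D (List.zipWith (· \ ·) W Bs) ∧
        (∀ i j, i < j → j < W.length →
          Par D (Bs.getD i ∅) (W.getD j ∅ \ Bs.getD j ∅)) ∧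
        x = traceOf D (List.zipWith (· \ ·) W Bs) ∧
        y = traceOf D Bs := by
  
  constructor
  · intro h
    obtain ⟨U, hU⟩ := Con.mk'_surjective x
    obtain ⟨V, hV⟩ := Con.mk'_surjective y
    have hxy : (traceCon D).mk'
        (FreeMonoid.ofList (FreeMonoid.toList U ++ FreeMonoid.toList V)) = traceOf D W := by
      rw [← h, ← hU, ← hV]
      show (traceCon D).mk' (FreeMonoid.ofList (FreeMonoid.toList U) *
        FreeMonoid.ofList (FreeMonoid.toList V)) = _
      rw [map_mul, FreeMonoid.ofList_toList, FreeMonoid.ofList_toList]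
    have htc : Tr.tc D (FreeMonoid.toList U ++ FreeMonoid.toList V)
        (W.flatMap Finset.toList) := (Con.eq _).1 hxy
    have heqv := Tr.eqv_of_tc hsymm htc
    obtain ⟨Bs, hlen, hsub, hfnf2, hpar, hequ, heqv'⟩ :=
      Tr.main_fwd hrefl hsymm W _ _ hWind hW heqv
    refine ⟨Bs, hlen, hsub, hfnf2, hpar, ?_, ?_⟩
    · rw [← hU, ← FreeMonoid.ofList_toList U]
      exact (Con.eq _).2 (Tr.tc_of_eqv hrefl hsymm hequ)
    · rw [← hV, ← FreeMonoid.ofList_toList V]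
      exact (Con.eq _).2 (Tr.tc_of_eqv hrefl hsymm heqv')
  · rintro ⟨Bs, hlen, hsub, hfnf2, hpar, rfl, rfl⟩
    have h := Tr.main_bwd hrefl hsymm W Bs hWind hlen hsub hpar
    have htc := Tr.tc_of_eqv hrefl hsymm h
    show (traceCon D).mk' _ * (traceCon D).mk' _ = (traceCon D).mk' _
    rw [← map_mul]
    exact (Con.eq _).2 htc
end

section
/- The easy direction of the Foata factorisation lemma: if W = A₁⋯Aₙ is in extended Foata normal form and B_i ⊆ A_i satisfy B_i ∥ (A_j∖B_j) for all 1 ≤ i < j ≤ n, then [(A₁∖B₁)⋯(Aₙ∖Bₙ)] · [B₁⋯Bₙ] = [A₁⋯Aₙ] in the trace monoid. -/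
namespace Stmt11Aux

variable {α : Type*} (D : α → α → Prop)

/-- Abbreviation for the trace of a list of letters. -/
noncomputable def tmk (l : List α) : (traceCon D).Quotient :=
  (traceCon D).mk' (FreeMonoid.ofList l)

lemma tmk_append (l1 l2 : List α) : tmk D (l1 ++ l2) = tmk D l1 * tmk D l2 := by
  simp [tmk, FreeMonoid.ofList_append, map_mul]

lemma tmk_swap {a b : α} (h : Indep D a b) (l : List α) :
    tmk D (a :: b :: l) = tmk D (b :: a :: l) := by
  have h2 : tmk D [a, b] = tmk D [b, a] := by
    apply (Con.eq _).mpr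
    exact ConGen.Rel.of _ _ ⟨a, b, h, rfl, rfl⟩
  have e1 : a :: b :: l = [a, b] ++ l := rfl
  have e2 : b :: a :: l = [b, a] ++ l := rfl
  rw [e1, e2, tmk_append, tmk_append, h2]

lemma tmk_comm_single {a : α} {l : List α} (h : ∀ b ∈ l, Indep D a b) :
    tmk D (a :: l) = tmk D (l ++ [a]) := by
  induction l with
  | nil => rfl
  | cons b l ih =>
    have h1 : Indep D a b := h b (List.mem_cons_self)
    rw [tmk_swap D h1]
    have e1 : b :: a :: l = [b] ++ (a :: l) := rfl
    have e2 : b :: l ++ [a] = [b] ++ (l ++ [a]) := by simp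
    rw [e1, e2, tmk_append, tmk_append, ih (fun c hc => h c (List.mem_cons_of_mem _ hc))]

lemma tmk_comm {l1 l2 : List α} (h : ∀ a ∈ l1, ∀ b ∈ l2, Indep D a b) :
    tmk D (l1 ++ l2) = tmk D (l2 ++ l1) := by
  induction l1 with
  | nil => simp
  | cons a l1 ih =>
    have hx : tmk D (a :: l2) = tmk D (l2 ++ [a]) :=
      tmk_comm_single D (h a (List.mem_cons_self))
    have e1 : a :: l2 = [a] ++ l2 := rfl
    rw [e1, tmk_append, tmk_append] at hx
    have ih2 : tmk D l1 * tmk D l2 = tmk D l2 * tmk D l1 := by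
      rw [← tmk_append, ← tmk_append]; exact ih (fun x hx => h x (List.mem_cons_of_mem _ hx))
    have e2 : (a :: l1) ++ l2 = [a] ++ (l1 ++ l2) := rfl
    have e3 : l2 ++ (a :: l1) = (l2 ++ [a]) ++ l1 := by simp
    calc tmk D ((a :: l1) ++ l2) = tmk D [a] * (tmk D l1 * tmk D l2) := by
          rw [e2, tmk_append, tmk_append]
      _ = tmk D [a] * (tmk D l2 * tmk D l1) := by rw [ih2]
      _ = (tmk D [a] * tmk D l2) * tmk D l1 := (mul_assoc _ _ _).symm
      _ = (tmk D l2 * tmk D [a]) * tmk D l1 := by rw [hx]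
      _ = tmk D (l2 ++ (a :: l1)) := by rw [e3, tmk_append, tmk_append]

lemma tmk_perm {l l' : List α} (h : l.Perm l') :
    (∀ a ∈ l, ∀ b ∈ l, a ≠ b → Indep D a b) → tmk D l = tmk D l' := by
  induction h with
  | nil => intro _; rfl
  | cons x h ih =>
    intro hind
    have := ih (fun a ha b hb hne => hind a (List.mem_cons_of_mem _ ha)
      b (List.mem_cons_of_mem _ hb) hne)
    show tmk D ([x] ++ _) = tmk D ([x] ++ _)
    rw [tmk_append, tmk_append, this]
  | swap x y l =>
    intro hind
    by_cases hxy : x = y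
    · subst hxy; rfl
    · exact tmk_swap D (hind y (by simp) x (by simp) (Ne.symm hxy)) l
  | trans h1 h2 ih1 ih2 =>
    intro hind
    have hind2 := fun a ha b hb hne =>
      hind a (h1.mem_iff.mpr ha) b (h1.mem_iff.mpr hb) hne
    exact (ih1 hind).trans (ih2 hind2)

lemma tmk_sdiff_mul [DecidableEq α] {A B : Finset α} (hBA : B ⊆ A)
    (hA : IndepSet D A) : tmk D ((A \ B).toList ++ B.toList) = tmk D A.toList := by
  apply tmk_perm
  · rw [← Multiset.coe_eq_coe, ← Multiset.coe_add, Finset.coe_toList, Finset.coe_toList,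
      Finset.coe_toList, Finset.sdiff_val, tsub_add_cancel_of_le (Finset.val_le_iff.mpr hBA)]
  · intro a ha b hb hne
    have hmem : ∀ c, c ∈ (A \ B).toList ++ B.toList → c ∈ A := by
      intro c hc
      rcases List.mem_append.mp hc with h | h
      · exact Finset.sdiff_subset (Finset.mem_toList.mp h)
      · exact hBA (Finset.mem_toList.mp h)
    exact hA a (hmem a ha) b (hmem b hb) hne

lemma traceOf_cons (X : Finset α) (L : List (Finset α)) :
    traceOf D (X :: L) = tmk D X.toList * traceOf D L := by
  show tmk D ((X :: L).flatMap Finset.toList) = _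
  rw [List.flatMap_cons, tmk_append]
  rfl

end Stmt11Aux

open Stmt11Aux in
/-- Easy direction of the Foata factorisation lemma: if `W = A₁⋯Aₙ` is in extended
Foata normal form and `Bᵢ ⊆ Aᵢ` satisfy `Bᵢ ∥ (Aⱼ∖Bⱼ)` for `i < j`, then
`[(A₁∖B₁)⋯(Aₙ∖Bₙ)]·[B₁⋯Bₙ] = [A₁⋯Aₙ]`. -/
theorem stmt11 {α : Type*} [DecidableEq α] (D : α → α → Prop)
    (hrefl : ∀ a, D a a) (hsymm : ∀ a b, D a b → D b a)
    (W : List (Finset α)) (hWind : ∀ A ∈ W, IndepSet D A) (hW : eFNF D W)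
    (Bs : List (Finset α)) (hlen : Bs.length = W.length)
    (hsub : ∀ i, Bs.getD i ∅ ⊆ W.getD i ∅)
    (hpar : ∀ i j, i < j → j < W.length →
      Par D (Bs.getD i ∅) (W.getD j ∅ \ Bs.getD j ∅)) :
    traceOf D (List.zipWith (· \ ·) W Bs) * traceOf D Bs = traceOf D W := by
  induction W generalizing Bs with
  | nil =>
    have hBs : Bs = [] := List.eq_nil_of_length_eq_zero (by simpa using hlen)
    subst hBs
    show tmk D [] * tmk D [] = tmk D []
    exact one_mul _
  | cons A W' ih =>
    obtain ⟨B, Bs', rfl⟩ : ∃ B Bs', Bs = B :: Bs' := by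
      cases Bs with
      | nil => simp at hlen
      | cons B Bs' => exact ⟨B, Bs', rfl⟩
    -- tail hypotheses
    have hWind' : ∀ C ∈ W', IndepSet D C := fun C hC => hWind C (List.mem_cons_of_mem _ hC)
    have hW' : eFNF D W' := hW.tail
    have hlen' : Bs'.length = W'.length := by simpa using hlen
    have hsub' : ∀ i, Bs'.getD i ∅ ⊆ W'.getD i ∅ := fun i => hsub (i + 1)
    have hpar' : ∀ i j, i < j → j < W'.length →
        Par D (Bs'.getD i ∅) (W'.getD j ∅ \ Bs'.getD j ∅) := by
      intro i j hij hj
      have := hpar (i + 1) (j + 1) (by omega) (by simpa using Nat.succ_lt_succ hj)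
      simpa using this
    have IH := ih hWind' hW' Bs' hlen' hsub' hpar'
    -- expand
    rw [List.zipWith_cons_cons, traceOf_cons, traceOf_cons, traceOf_cons]
    -- commute tmk B.toList past the diff part
    have hcomm : traceOf D (List.zipWith (· \ ·) W' Bs') * tmk D B.toList
        = tmk D B.toList * traceOf D (List.zipWith (· \ ·) W' Bs') := by
      have key : ∀ a ∈ (List.zipWith (· \ ·) W' Bs').flatMap Finset.toList,
          ∀ b ∈ B.toList, Indep D a b := by
        intro a ha b hb
        rcases List.mem_flatMap.mp ha with ⟨C, hC, haC⟩
        rcases List.mem_iff_getElem.mp hC with ⟨j, hj, hCj⟩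
        have hjW : j < W'.length := lt_of_lt_of_le hj (by simp [hlen'])
        have hjB : j < Bs'.length := lt_of_lt_of_le hj (by simp [hlen'])
        have hCval : C = W'[j] \ Bs'[j] := by
          rw [← hCj, List.getElem_zipWith]
        have hP := hpar 0 (j + 1) (by omega) (by simpa using Nat.succ_lt_succ hjW)
        have h0 : (B :: Bs').getD 0 ∅ = B := rfl
        have hWj : (A :: W').getD (j + 1) ∅ = W'[j] := by
          show W'.getD j ∅ = W'[j]
          exact List.getD_eq_getElem _ _ hjW
        have hBj : (B :: Bs').getD (j + 1) ∅ = Bs'[j] := by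
          show Bs'.getD j ∅ = Bs'[j]
          exact List.getD_eq_getElem _ _ hjB
        rw [h0, hWj, hBj] at hP
        have hind := hP b (Finset.mem_toList.mp hb) a (hCval ▸ Finset.mem_toList.mp haC)
        exact ⟨hind.1.symm, fun hD => hind.2 (hsymm _ _ hD)⟩
      have := tmk_comm D key
      rw [tmk_append, tmk_append] at this
      exact this
    have hsubB : B ⊆ A := hsub 0
    calc tmk D (A \ B).toList * traceOf D (List.zipWith (· \ ·) W' Bs') *
          (tmk D B.toList * traceOf D Bs')
        = tmk D (A \ B).toList * (traceOf D (List.zipWith (· \ ·) W' Bs') * tmk D B.toList)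
            * traceOf D Bs' := by
          rw [mul_assoc, mul_assoc, mul_assoc]
      _ = tmk D (A \ B).toList * (tmk D B.toList * traceOf D (List.zipWith (· \ ·) W' Bs'))
            * traceOf D Bs' := by rw [hcomm]
      _ = (tmk D (A \ B).toList * tmk D B.toList) *
            (traceOf D (List.zipWith (· \ ·) W' Bs') * traceOf D Bs') := by
          rw [mul_assoc, mul_assoc, mul_assoc]
      _ = tmk D A.toList * traceOf D W' := by
          rw [← tmk_append, tmk_sdiff_mul D hsubB (hWind A (List.mem_cons_self)), IH]
end

section
/- The class of fnf-automatic relations (of a fixed arity) over a trace monoid is closed under union, intersection, and complement. -/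
/-- The convolution language `L_R ⊆ (F^k)*` of a `k`-ary trace relation `R`: the words
over `F^k` all of whose component words are in extended Foata normal form (over
independent sets) and represent a tuple of traces belonging to `R`. -/
def LRel {α : Type*} (D : α → α → Prop) {k : ℕ}
    (R : Set (Fin k → (traceCon D).Quotient)) : Language (Fin k → Finset α) :=
  {W | (∀ i : Fin k, (∀ A ∈ W.map (fun f => f i), IndepSet D A) ∧
          eFNF D (W.map (fun f => f i))) ∧
    (fun i => traceOf D (W.map (fun f => f i))) ∈ R}

/-- A `k`-ary trace relation is fnf-automatic if its convolution language is regular. -/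
def FnfAutomatic {α : Type*} (D : α → α → Prop) {k : ℕ}
    (R : Set (Fin k → (traceCon D).Quotient)) : Prop :=
  (LRel D R).IsRegular

/-- The language of extended Foata normal forms of elements of a trace language. -/
def LLang {α : Type*} (D : α → α → Prop) (L : Set (traceCon D).Quotient) :
    Language (Finset α) :=
  {W | (∀ A ∈ W, IndepSet D A) ∧ eFNF D W ∧ traceOf D W ∈ L}

/-- A trace language is fnf-automatic if its language of extended Foata normal forms
is regular. -/
def FnfAutomaticLang {α : Type*} (D : α → α → Prop)
    (L : Set (traceCon D).Quotient) : Prop :=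
  (LLang D L).IsRegular

section Aux

/-- Complement closure for regular languages. -/
lemma Language.IsRegular.compl' {T : Type*} {L : Language T} (h : L.IsRegular) :
    Language.IsRegular {x | x ∉ L} := by
  obtain ⟨σ, inst, M, hM⟩ := h
  refine ⟨σ, inst, ⟨M.step, M.start, M.acceptᶜ⟩, ?_⟩
  ext x
  have : x ∈ M.accepts ↔ x ∈ L := by rw [hM]
  exact not_congr this

/-- Intersection closure for regular languages. -/
lemma Language.IsRegular.inter' {T : Type*} {L L' : Language T}
    (h : L.IsRegular) (h' : L'.IsRegular) :
    Language.IsRegular {x | x ∈ L ∧ x ∈ L'} := by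
  obtain ⟨σ, inst, M, hM⟩ := h
  obtain ⟨τ, inst', N, hN⟩ := h'
  let P : DFA T (σ × τ) :=
    ⟨fun p a => (M.step p.1 a, N.step p.2 a), (M.start, N.start),
      {p | p.1 ∈ M.accept ∧ p.2 ∈ N.accept}⟩
  refine ⟨σ × τ, instFintypeProd σ τ, P, ?_⟩
  have key : ∀ (x : List T) (s : σ) (t : τ),
      P.evalFrom (s, t) x = (M.evalFrom s x, N.evalFrom t x) := by
    intro x
    induction x with
    | nil => intro s t; rfl
    | cons a x ih =>
        intro s t
        simp only [DFA.evalFrom, List.foldl_cons] at *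
        exact ih _ _
  ext x
  have hx : M.evalFrom M.start x ∈ M.accept ↔ x ∈ L := by
    rw [← hM]; exact Iff.rfl
  have hx' : N.evalFrom N.start x ∈ N.accept ↔ x ∈ L' := by
    rw [← hN]; exact Iff.rfl
  rw [DFA.mem_accepts]
  have e1 : P.eval x = (M.evalFrom M.start x, N.evalFrom N.start x) :=
    key x M.start N.start
  rw [e1]
  constructor
  · rintro ⟨h1, h2⟩
    exact ⟨hx.mp h1, hx'.mp h2⟩
  · rintro ⟨h1, h2⟩
    exact ⟨hx.mpr h1, hx'.mpr h2⟩

/-- Union closure for regular languages. -/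
lemma Language.IsRegular.union' {T : Type*} {L L' : Language T}
    (h : L.IsRegular) (h' : L'.IsRegular) :
    Language.IsRegular {x | x ∈ L ∨ x ∈ L'} := by
  have h1 := (h.compl'.inter' h'.compl').compl'
  refine Eq.mpr (congrArg Language.IsRegular ?_) h1
  refine Set.ext fun x => ?_
  show (x ∈ L ∨ x ∈ L') ↔ ¬(x ∉ L ∧ x ∉ L')
  exact or_iff_not_and_not

open Classical in
/-- A DFA recognizing "all letters good and consecutive letters linked". -/
noncomputable def chainDFA {β : Type*} (Good : β → Prop) (Link : β → β → Prop) :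
    DFA β (Option (Option β)) where
  step s f := match s with
    | none => none
    | some prev => if Good f ∧ ∀ g ∈ prev, Link g f then some (some f) else none
  start := some none
  accept := {s | s ≠ none}

open Classical in
lemma chainDFA_step_some {β : Type*} (Good : β → Prop) (Link : β → β → Prop)
    (prev : Option β) (f : β) :
    (chainDFA Good Link).step (some prev) f =
      (if Good f ∧ ∀ g ∈ prev, Link g f then some (some f) else none) := rfl

lemma chainDFA_evalFrom_none {β : Type*} (Good : β → Prop) (Link : β → β → Prop)
    (W : List β) : (chainDFA Good Link).evalFrom none W = none := by
  induction W with
  | nil => rfl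
  | cons f W ih => exact ih

lemma chainDFA_main {β : Type*} (Good : β → Prop) (Link : β → β → Prop) (W : List β) :
    ∀ prev : Option β, ((chainDFA Good Link).evalFrom (some prev) W ≠ none ↔
      ((∀ f ∈ W, Good f) ∧ W.Chain' Link ∧ ∀ f ∈ W.head?, ∀ g ∈ prev, Link g f)) := by
  induction W with
  | nil => intro prev; simp [DFA.evalFrom]; exact List.IsChain.nil
  | cons f W ih =>
      intro prev
      by_cases hc : Good f ∧ ∀ g ∈ prev, Link g f
      · have hstep : (chainDFA Good Link).step (some prev) f = some (some f) := by
          rw [chainDFA_step_some, if_pos hc]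
        have heval : (chainDFA Good Link).evalFrom (some prev) (f :: W)
            = (chainDFA Good Link).evalFrom (some (some f)) W := by
          show (chainDFA Good Link).evalFrom ((chainDFA Good Link).step (some prev) f) W = _
          rw [hstep]
        rw [heval, ih (some f)]
        simp only [List.Chain', List.forall_mem_cons, List.isChain_cons, List.head?_cons,
          Option.mem_def, Option.some.injEq, forall_eq']
        constructor
        · rintro ⟨hG, hC, hL⟩
          exact ⟨⟨hc.1, hG⟩, ⟨fun b hb => hL b hb, hC⟩, fun g hg => hc.2 g hg⟩
        · rintro ⟨⟨_, hG⟩, ⟨hh, hC⟩, _⟩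
          exact ⟨hG, hC, fun b hb => hh b hb⟩
      · have hstep : (chainDFA Good Link).step (some prev) f = none := by
          rw [chainDFA_step_some, if_neg hc]
        have heval : (chainDFA Good Link).evalFrom (some prev) (f :: W) = none := by
          show (chainDFA Good Link).evalFrom ((chainDFA Good Link).step (some prev) f) W = _
          rw [hstep]
          exact chainDFA_evalFrom_none Good Link W
        rw [heval]
        simp only [ne_eq, not_true_eq_false, false_iff, List.forall_mem_cons,
          List.head?_cons, Option.mem_def, Option.some.injEq, forall_eq']
        rintro ⟨⟨h1, _⟩, _, h3⟩
        exact hc ⟨h1, fun g hg => h3 g hg⟩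

lemma chainLang_regular {β : Type*} [Fintype β] (Good : β → Prop) (Link : β → β → Prop) :
    Language.IsRegular {W : List β | (∀ f ∈ W, Good f) ∧ W.Chain' Link} := by
  classical
  refine ⟨Fin (Fintype.card (Option (Option β))), inferInstance,
    DFA.reindex (Fintype.equivFin (Option (Option β))) (chainDFA Good Link), ?_⟩
  rw [DFA.accepts_reindex]
  ext W
  rw [DFA.mem_accepts]
  show (chainDFA Good Link).evalFrom (some none) W ∈ {s | s ≠ none} ↔ _
  rw [Set.mem_setOf_eq, chainDFA_main]
  show _ ↔ ((∀ f ∈ W, Good f) ∧ W.Chain' Link)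
  simp

lemma chain'_forall_iff {ι β : Type*} (R : ι → β → β → Prop) (l : List β) :
    l.Chain' (fun a b => ∀ i, R i a b) ↔ ∀ i, l.Chain' (R i) := by
  simp only [List.Chain', List.isChain_iff_getElem]
  exact ⟨fun h i j hj => h j hj i, fun h j hj i => h i j hj⟩

lemma LRel_univ_eq {α : Type*} (D : α → α → Prop) {k : ℕ} :
    LRel D (Set.univ : Set (Fin k → (traceCon D).Quotient)) =
      {W : List (Fin k → Finset α) | (∀ f ∈ W, ∀ i, IndepSet D (f i)) ∧
        W.Chain' (fun g f => ∀ i, ↑(f i) ⊆ DepSet D (g i))} := by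
  refine Set.ext fun W => ?_
  constructor
  · rintro ⟨h, -⟩
    refine ⟨fun f hf i => (h i).1 _ (List.mem_map_of_mem hf), ?_⟩
    exact (chain'_forall_iff (fun (i : Fin k) (g f : Fin k → Finset α) =>
        (↑(f i) : Set α) ⊆ DepSet D (g i)) W).mpr
      (fun i => (List.isChain_map (R := fun (A B : Finset α) => (↑B : Set α) ⊆ DepSet D A)
        (fun (f : Fin k → Finset α) => f i)).mp (h i).2)
  · rintro ⟨h1, h2⟩
    refine ⟨fun i => ⟨?_, ?_⟩, Set.mem_univ _⟩
    · intro A hA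
      obtain ⟨f, hf, rfl⟩ := List.mem_map.mp hA
      exact h1 f hf i
    · exact (List.isChain_map (R := fun (A B : Finset α) => (↑B : Set α) ⊆ DepSet D A)
          (fun (f : Fin k → Finset α) => f i)).mpr
        ((chain'_forall_iff (fun (i : Fin k) (g f : Fin k → Finset α) =>
          (↑(f i) : Set α) ⊆ DepSet D (g i)) W).mp h2 i)

lemma LRel_union {α : Type*} (D : α → α → Prop) {k : ℕ}
    (R S : Set (Fin k → (traceCon D).Quotient)) :
    LRel D (R ∪ S) = {W | W ∈ LRel D R ∨ W ∈ LRel D S} := by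
  refine Set.ext fun W => ⟨?_, ?_⟩
  · rintro ⟨hv, hRS⟩
    rcases hRS with h | h
    · exact Or.inl ⟨hv, h⟩
    · exact Or.inr ⟨hv, h⟩
  · rintro (⟨hv, h⟩ | ⟨hv, h⟩)
    · exact ⟨hv, Or.inl h⟩
    · exact ⟨hv, Or.inr h⟩

lemma LRel_inter {α : Type*} (D : α → α → Prop) {k : ℕ}
    (R S : Set (Fin k → (traceCon D).Quotient)) :
    LRel D (R ∩ S) = {W | W ∈ LRel D R ∧ W ∈ LRel D S} := by
  refine Set.ext fun W => ⟨?_, ?_⟩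
  · rintro ⟨hv, h1, h2⟩
    exact ⟨⟨hv, h1⟩, ⟨hv, h2⟩⟩
  · rintro ⟨⟨hv, h1⟩, ⟨-, h2⟩⟩
    exact ⟨hv, h1, h2⟩

lemma LRel_compl {α : Type*} (D : α → α → Prop) {k : ℕ}
    (R : Set (Fin k → (traceCon D).Quotient)) :
    LRel D Rᶜ = {W | W ∈ LRel D (Set.univ : Set (Fin k → (traceCon D).Quotient)) ∧
      W ∈ {V | V ∉ LRel D R}} := by
  refine Set.ext fun W => ⟨?_, ?_⟩
  · rintro ⟨hv, h⟩
    refine ⟨⟨hv, Set.mem_univ _⟩, ?_⟩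
    rintro ⟨-, hmem⟩
    exact h hmem
  · rintro ⟨⟨hv, -⟩, h⟩
    exact ⟨hv, fun hmem => h ⟨hv, hmem⟩⟩

end Aux

/-- The class of fnf-automatic relations of a fixed arity is closed under union,
intersection, and complement. -/
theorem stmt13 {α : Type*} [Fintype α] [DecidableEq α] (D : α → α → Prop)
    (hrefl : ∀ a, D a a) (hsymm : ∀ a b, D a b → D b a) {k : ℕ}
    (R S : Set (Fin k → (traceCon D).Quotient))
    (hR : FnfAutomatic D R) (hS : FnfAutomatic D S) :
    FnfAutomatic D (R ∪ S) ∧ FnfAutomatic D (R ∩ S) ∧ FnfAutomatic D Rᶜ := by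
  have huniv : FnfAutomatic D (Set.univ : Set (Fin k → (traceCon D).Quotient)) := by
    unfold FnfAutomatic
    rw [LRel_univ_eq]
    exact chainLang_regular _ _
  refine ⟨?_, ?_, ?_⟩
  · unfold FnfAutomatic at *
    rw [LRel_union]
    exact hR.union' hS
  · unfold FnfAutomatic at *
    rw [LRel_inter]
    exact hR.inter' hS
  · unfold FnfAutomatic at *
    rw [LRel_compl]
    exact huniv.inter' hR.compl'
end

section
/- If R₁, R₂ ⊆ M² are fnf-automatic binary relations on a trace monoid, then their composition R₁ ∘ R₂ = {(x,z) | ∃y, (x,y) ∈ R₁ ∧ (y,z) ∈ R₂} is fnf-automatic. -/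
set_option linter.unusedSectionVars false

open List

section RegToolkit
variable {T T' : Type*}

theorem myreg_inter {L₁ L₂ : Language T} (h₁ : L₁.IsRegular) (h₂ : L₂.IsRegular) :
    Language.IsRegular {w | w ∈ L₁ ∧ w ∈ L₂} := by
  obtain ⟨σ₁, f₁, M₁, rfl⟩ := h₁
  obtain ⟨σ₂, f₂, M₂, rfl⟩ := h₂
  refine ⟨σ₁ × σ₂, inferInstance, ⟨fun s a => (M₁.step s.1 a, M₂.step s.2 a),
    (M₁.start, M₂.start), {s | s.1 ∈ M₁.accept ∧ s.2 ∈ M₂.accept}⟩, ?_⟩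
  have key : ∀ (w : List T) (s : σ₁ × σ₂),
      DFA.evalFrom ⟨fun s a => (M₁.step s.1 a, M₂.step s.2 a), (M₁.start, M₂.start),
        {s | s.1 ∈ M₁.accept ∧ s.2 ∈ M₂.accept}⟩ s w
        = (M₁.evalFrom s.1 w, M₂.evalFrom s.2 w) := by
    intro w
    induction w with
    | nil => intro s; rfl
    | cons a w ih => intro s; simpa [DFA.evalFrom] using ih _
  ext w
  simp only [DFA.mem_accepts, DFA.eval, key]
  rfl

theorem myreg_preimage (f : T' → T) {L : Language T} (h : L.IsRegular) :
    Language.IsRegular (List.map f ⁻¹' L) := by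
  obtain ⟨σ, fσ, M, rfl⟩ := h
  exact ⟨σ, fσ, M.comap f, M.accepts_comap f⟩

theorem myreg_quot (P : Language T) {L : Language T} (h : L.IsRegular) :
    Language.IsRegular {w | ∃ v ∈ P, w ++ v ∈ L} := by
  obtain ⟨σ, fσ, M, rfl⟩ := h
  refine ⟨σ, fσ, ⟨M.step, M.start, {s | ∃ v ∈ P, M.evalFrom s v ∈ M.accept}⟩, ?_⟩
  ext w
  simp only [DFA.mem_accepts, DFA.eval]
  constructor
  · rintro ⟨v, hv, hacc⟩
    refine ⟨v, hv, ?_⟩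
    show M.evalFrom M.start (w ++ v) ∈ M.accept
    rw [DFA.evalFrom_of_append]
    exact hacc
  · rintro ⟨v, hv, hacc⟩
    rw [show M.evalFrom M.start (w ++ v) = M.evalFrom (M.evalFrom M.start w) v from
      DFA.evalFrom_of_append ..] at hacc
    exact ⟨v, hv, hacc⟩

theorem myreg_image (f : T' → T) {L : Language T'} (h : L.IsRegular) :
    Language.IsRegular (List.map f '' L) := by
  classical
  obtain ⟨σ, fσ, M, rfl⟩ := h
  set N : NFA T σ := ⟨fun s a => {t | ∃ c, f c = a ∧ M.step s c = t}, {M.start}, M.accept⟩ with hN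
  have key : ∀ (w : List T) (S : Set σ) (t : σ),
      t ∈ N.evalFrom S w ↔ ∃ s ∈ S, ∃ u : List T', u.map f = w ∧ M.evalFrom s u = t := by
    intro w
    induction w with
    | nil =>
      intro S t
      simp only [NFA.evalFrom_nil]
      constructor
      · intro ht; exact ⟨t, ht, [], rfl, rfl⟩
      · rintro ⟨s, hs, u, hu, hev⟩
        rw [List.map_eq_nil_iff] at hu
        subst hu; simpa using hev ▸ hs
    | cons a w ih =>
      intro S t
      simp only [NFA.evalFrom, List.foldl_cons]
      rw [show List.foldl N.stepSet (N.stepSet S a) w = N.evalFrom (N.stepSet S a) w from rfl,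
        ih]
      constructor
      · rintro ⟨s', hs', u, hu, hev⟩
        rw [NFA.mem_stepSet] at hs'
        obtain ⟨s, hs, c, hc, hstep⟩ := hs'
        exact ⟨s, hs, c :: u, by simp [hc, hu], by rw [show M.evalFrom s (c :: u) = M.evalFrom (M.step s c) u from rfl, hstep]; exact hev⟩
      · rintro ⟨s, hs, u, hu, hev⟩
        cases u with
        | nil => simp at hu
        | cons c u =>
          simp only [List.map_cons, List.cons.injEq] at hu
          refine ⟨M.step s c, ?_, u, hu.2, hev⟩
          rw [NFA.mem_stepSet]
          exact ⟨s, hs, c, hu.1, rfl⟩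
  have hacc : N.accepts = List.map f '' M.accepts := by
    ext w
    rw [NFA.mem_accepts]
    constructor
    · rintro ⟨s, hsacc, hsev⟩
      rw [key] at hsev
      obtain ⟨s0, hs0, u, hu, hev⟩ := hsev
      replace hs0 : s0 = M.start := hs0
      subst hs0
      exact ⟨u, by show M.evalFrom M.start u ∈ M.accept; rw [hev]; exact hsacc, hu⟩
    · rintro ⟨u, hu, huw⟩
      refine ⟨M.evalFrom M.start u, hu, ?_⟩
      rw [key]
      exact ⟨M.start, rfl, u, huw, rfl⟩
  exact ⟨Set σ, Set.fintype, N.toDFA, by rw [NFA.toDFA_correct, hacc]⟩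

end RegToolkit

section Traces
variable {α : Type*} [DecidableEq α] (D : α → α → Prop)

noncomputable def tr (l : List α) : (traceCon D).Quotient :=
  (traceCon D).mk' (FreeMonoid.ofList l)

variable {D}

lemma tr_append (l₁ l₂ : List α) : tr D (l₁ ++ l₂) = tr D l₁ * tr D l₂ := by
  rw [tr, show FreeMonoid.ofList (l₁ ++ l₂) = FreeMonoid.ofList l₁ * FreeMonoid.ofList l₂
    from rfl, map_mul]; rfl

lemma tr_swap2 {a b : α} (h : Indep D a b) : tr D [a, b] = tr D [b, a] := by
  rw [tr, tr]
  exact (Con.eq _).mpr (ConGen.Rel.of _ _ ⟨a, b, h, rfl, rfl⟩)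

lemma tr_swap {a b : α} (h : Indep D a b) (l : List α) :
    tr D (a :: b :: l) = tr D (b :: a :: l) := by
  rw [show a :: b :: l = [a, b] ++ l from rfl, show b :: a :: l = [b, a] ++ l from rfl,
    tr_append, tr_append, tr_swap2 h]

lemma tr_comm (hsymm : ∀ a b, D a b → D b a) (a : α) :
    ∀ l : List α, (∀ b ∈ l, Indep D a b) → tr D (l ++ [a]) = tr D (a :: l) := by
  intro l
  induction l with
  | nil => intro _; rfl
  | cons c l ih =>
    intro h
    have hac : Indep D a c := h c (List.mem_cons_self ..)
    have hca : Indep D c a := ⟨Ne.symm hac.1, fun hd => hac.2 (hsymm _ _ hd)⟩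
    calc tr D ((c :: l) ++ [a]) = tr D [c] * tr D (l ++ [a]) := tr_append [c] _
    _ = tr D [c] * tr D (a :: l) := by rw [ih (fun b hb => h b (List.mem_cons_of_mem _ hb))]
    _ = tr D (c :: a :: l) := (tr_append [c] _).symm
    _ = tr D (a :: c :: l) := tr_swap hca l

lemma tr_perm : ∀ {l l' : List α}, l.Perm l' →
    (∀ x ∈ l, ∀ y ∈ l, x ≠ y → Indep D x y) → tr D l = tr D l' := by
  intro l l' hp
  induction hp with
  | nil => intro _; rfl
  | cons x h ih =>
    intro hyp
    rename_i l₁ l₂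
    calc tr D (x :: l₁) = tr D [x] * tr D l₁ := tr_append [x] _
    _ = tr D [x] * tr D l₂ := by
        rw [ih (fun a ha b hb => hyp a (List.mem_cons_of_mem _ ha) b (List.mem_cons_of_mem _ hb))]
    _ = tr D (x :: l₂) := (tr_append [x] _).symm
  | swap x y l =>
    intro hyp
    by_cases hxy : y = x
    · subst hxy; rfl
    · exact tr_swap (hyp y (by simp) x (by simp) hxy) l
  | trans h₁ h₂ ih₁ ih₂ =>
    intro hyp
    rw [ih₁ hyp]
    exact ih₂ (fun x hx y hy => hyp x (h₁.mem_iff.2 hx) y (h₁.mem_iff.2 hy))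

lemma tr_insert (hsymm : ∀ a b, D a b → D b a) {a : α} {B : Finset α} (ha : a ∉ B)
    (hind : IndepSet D (insert a B)) :
    tr D (insert a B).toList = tr D (B.toList ++ [a]) := by
  have h1 : tr D (insert a B).toList = tr D (a :: B.toList) := by
    apply tr_perm (Finset.toList_insert ha)
    intro x hx y hy
    rw [Finset.mem_toList] at hx hy
    exact hind x hx y hy
  have h2 : tr D (B.toList ++ [a]) = tr D (a :: B.toList) := by
    apply tr_comm hsymm
    intro b hb
    rw [Finset.mem_toList] at hb
    have hba : b ∈ insert a B := Finset.mem_insert_of_mem hb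
    exact hind a (Finset.mem_insert_self a B) b hba (fun h => ha (h ▸ hb))
  rw [h1, h2]

lemma traceOf_eq_tr (W : List (Finset α)) : traceOf D W = tr D (W.flatMap Finset.toList) := rfl

lemma traceOf_append (W V : List (Finset α)) :
    traceOf D (W ++ V) = traceOf D W * traceOf D V := by
  rw [traceOf_eq_tr, traceOf_eq_tr, traceOf_eq_tr, List.flatMap_append, tr_append]

lemma traceOf_pad (W : List (Finset α)) (k : ℕ) :
    traceOf D (W ++ List.replicate k (∅ : Finset α)) = traceOf D W := by
  have h1 : traceOf D (List.replicate k (∅ : Finset α)) = 1 := by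
    induction k with
    | zero => show (traceCon D).mk' 1 = 1; exact map_one _
    | succ n ih =>
      rw [List.replicate_succ, show traceOf D (∅ :: List.replicate n (∅ : Finset α))
        = traceOf D ([∅] ++ List.replicate n ∅) from rfl, traceOf_append, ih, mul_one]
      have h2 : ([(∅ : Finset α)]).flatMap Finset.toList = [] := by simp
      rw [traceOf, h2]
      show (traceCon D).mk' 1 = 1; exact map_one _
  rw [traceOf_append, h1, mul_one]

lemma DepSet_mono {A B : Finset α} (h : A ⊆ B) : DepSet D A ⊆ DepSet D B := by
  rintro x ⟨a, ha, hd⟩; exact ⟨a, h ha, hd⟩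

def Valid (D : α → α → Prop) (W : List (Finset α)) : Prop :=
  (∀ A ∈ W, IndepSet D A) ∧ eFNF D W

lemma valid_append_left {W V : List (Finset α)} (h : Valid D (W ++ V)) : Valid D W :=
  ⟨fun A hA => h.1 A (List.mem_append_left _ hA), (List.isChain_append.1 h.2).1⟩

lemma valid_pad {W : List (Finset α)} (h : Valid D W) (k : ℕ) :
    Valid D (W ++ List.replicate k (∅ : Finset α)) := by
  refine ⟨?_, ?_⟩
  · intro A hA
    rcases List.mem_append.1 hA with h' | h'
    · exact h.1 A h'
    · rw [List.eq_of_mem_replicate h']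
      intro a ha; simp at ha
  · refine List.isChain_append.2 ⟨h.2, ?_, ?_⟩
    · apply List.isChain_replicate_of_rel
      intro x hx; simp at hx
    · intro x _ y hy
      have : y = ∅ := List.eq_of_mem_replicate (List.mem_of_mem_head? hy)
      subst this; intro z hz; simp at hz

end Traces

section Insertion
variable {α : Type*} [DecidableEq α] {D : α → α → Prop}
set_option linter.unusedSectionVars false

lemma traceOf_nil : traceOf D ([] : List (Finset α)) = 1 := map_one _

lemma traceOf_singleton (B : Finset α) : traceOf D [B] = tr D B.toList := by
  rw [traceOf_eq_tr]; simp

lemma indepSet_singleton (a : α) : IndepSet D {a} := by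
  intro x hx y hy hxy
  simp only [Finset.mem_singleton] at hx hy
  exact absurd (hx.trans hy.symm) hxy

lemma insert_letter (hrefl : ∀ a, D a a) (hsymm : ∀ a b, D a b → D b a) (a : α) :
    ∀ W : List (Finset α), Valid D W →
    ∃ W', Valid D W' ∧ traceOf D W' = traceOf D W * tr D [a] ∧
      ((W' = W ++ [{a}] ∧ (W = [] ∨ ∃ B ∈ W.getLast?, ∃ b ∈ B, D b a)) ∨
       (∃ B ∈ W.getLast?, ∃ B' ∈ W'.getLast?, B ⊆ B')) := by
  intro W
  induction W using List.reverseRecOn with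
  | nil =>
    intro _
    refine ⟨[{a}], ⟨?_, List.isChain_singleton _⟩, ?_, Or.inl ⟨rfl, Or.inl rfl⟩⟩
    · intro A hA
      rw [List.mem_singleton] at hA
      subst hA
      exact indepSet_singleton a
    · rw [traceOf_singleton, Finset.toList_singleton, traceOf_nil, one_mul]
  | append_singleton U B ih =>
    intro hV
    have ValidU : Valid D U := valid_append_left hV
    have hBind : IndepSet D B := hV.1 B (List.mem_append_right _ (List.mem_singleton_self _))
    have hlast : (U ++ [B]).getLast? = some B := List.getLast?_concat
    have hJ : (↑B : Set α) ⊆ DepSet D (Option.getD U.getLast? B) := by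
      cases hU : U.getLast? with
      | none => simp only [Option.getD]; intro z hz; exact ⟨z, hz, hrefl z⟩
      | some B₀ =>
        have := (List.isChain_append.1 hV.2).2.2
        simpa using this B₀ (by rw [hU]; rfl) B rfl
    by_cases h : ∃ b ∈ B, D b a
    · refine ⟨(U ++ [B]) ++ [{a}], ⟨?_, ?_⟩, ?_, Or.inl ⟨rfl, Or.inr ⟨B, by rw [hlast]; exact rfl, h⟩⟩⟩
      · intro A hA
        rcases List.mem_append.1 hA with h' | h'
        · exact hV.1 A h'
        · rw [List.mem_singleton] at h'; subst h'; exact indepSet_singleton a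
      · refine List.isChain_append.2 ⟨hV.2, List.isChain_singleton _, ?_⟩
        intro x hx y hy
        rw [hlast, Option.mem_some_iff] at hx
        simp only [List.head?_cons, Option.mem_some_iff] at hy
        subst hx; subst hy
        intro z hz
        rw [Finset.coe_singleton, Set.mem_singleton_iff] at hz
        subst hz
        obtain ⟨b, hb, hD⟩ := h
        exact ⟨b, hb, hD⟩
      · rw [traceOf_append, traceOf_singleton, Finset.toList_singleton]
    · push_neg at h
      have haB : a ∉ B := fun hmem => h a hmem (hrefl a)
      have hins : IndepSet D (insert a B) := by
        intro x hx y hy hxy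
        rcases Finset.mem_insert.1 hx with rfl | hx' <;>
          rcases Finset.mem_insert.1 hy with rfl | hy'
        · exact absurd rfl hxy
        · exact ⟨hxy, fun hd => h y hy' (hsymm _ _ hd)⟩
        · exact ⟨hxy, h x hx'⟩
        · exact hBind x hx' y hy' hxy
      have htrBa : tr D (insert a B).toList = tr D (B.toList ++ [a]) := tr_insert hsymm haB hins
      have hcomm : tr D B.toList * tr D [a] = tr D [a] * tr D B.toList := by
        have := tr_comm hsymm a B.toList (fun b hb => by
          rw [Finset.mem_toList] at hb
          exact ⟨fun he => haB (he ▸ hb), fun hd => h b hb (hsymm _ _ hd)⟩)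
        rw [tr_append] at this
        rw [this]
        exact (tr_append [a] B.toList).symm
      obtain ⟨U', hU'v, hU'tr, hcase⟩ := ih ValidU
      rcases hcase with ⟨hU'eq, hU0⟩ | ⟨B₀, hB₀, B', hB', hsub⟩
      · rcases hU0 with rfl | ⟨B₀, hB₀, b, hb, hDba⟩
        · -- U = []
          refine ⟨[insert a B], ⟨?_, List.isChain_singleton _⟩, ?_, Or.inr ⟨B, ?_, insert a B, rfl, Finset.subset_insert a B⟩⟩
          · intro A hA
            rw [List.mem_singleton] at hA; subst hA; exact hins
          · rw [traceOf_singleton, htrBa, tr_append, List.nil_append, traceOf_singleton]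
          · rw [show ([] ++ [B] : List (Finset α)) = [B] from rfl]; exact rfl
        · -- a goes into B (last of U depends on a)
          refine ⟨U ++ [insert a B], ⟨?_, ?_⟩, ?_, Or.inr ⟨B, by rw [hlast]; exact rfl, insert a B, ?_, Finset.subset_insert a B⟩⟩
          · intro A hA
            rcases List.mem_append.1 hA with h' | h'
            · exact ValidU.1 A h'
            · rw [List.mem_singleton] at h'; subst h'; exact hins
          · refine List.isChain_append.2 ⟨ValidU.2, List.isChain_singleton _, ?_⟩
            intro x hx y hy
            rw [hB₀, Option.mem_some_iff] at hx
            simp only [List.head?_cons, Option.mem_some_iff] at hy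
            subst hx; subst hy
            intro z hz
            rw [Finset.coe_insert, Set.mem_insert_iff] at hz
            rcases hz with rfl | hz
            · exact ⟨b, hb, hDba⟩
            · have hJ' : (↑B : Set α) ⊆ DepSet D B₀ := by
                have := hJ; rwa [show U.getLast? = some B₀ from hB₀] at this
              exact hJ' hz
          · rw [traceOf_append, traceOf_append, traceOf_singleton, traceOf_singleton, htrBa,
              tr_append, mul_assoc]
          · rw [List.getLast?_concat]; exact rfl
      · -- merge happened inside U'
        refine ⟨U' ++ [B], ⟨?_, ?_⟩, ?_, Or.inr ⟨B, by rw [hlast]; exact rfl, B, ?_, Finset.Subset.refl B⟩⟩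
        · intro A hA
          rcases List.mem_append.1 hA with h' | h'
          · exact hU'v.1 A h'
          · rw [List.mem_singleton] at h'; subst h'; exact hBind
        · refine List.isChain_append.2 ⟨hU'v.2, List.isChain_singleton _, ?_⟩
          intro x hx y hy
          rw [hB', Option.mem_some_iff] at hx
          simp only [List.head?_cons, Option.mem_some_iff] at hy
          subst hx; subst hy
          have hJ' : (↑B : Set α) ⊆ DepSet D B₀ := by
            have := hJ; rwa [show U.getLast? = some B₀ from hB₀] at this
          exact hJ'.trans (DepSet_mono hsub)
        · rw [traceOf_append, traceOf_append, traceOf_singleton, hU'tr, mul_assoc, mul_assoc,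
            hcomm]
        · rw [List.getLast?_concat]; exact rfl

lemma fnf_exists (hrefl : ∀ a, D a a) (hsymm : ∀ a b, D a b → D b a)
    (t : (traceCon D).Quotient) : ∃ W, Valid D W ∧ traceOf D W = t := by
  obtain ⟨x, rfl⟩ := Con.mk'_surjective t
  suffices h : ∀ l : List α, ∃ W, Valid D W ∧ traceOf D W = tr D l by
    obtain ⟨W, hW, htr⟩ := h (FreeMonoid.toList x)
    exact ⟨W, hW, by rw [htr]; rfl⟩
  intro l
  induction l using List.reverseRecOn with
  | nil => exact ⟨[], ⟨by simp, List.isChain_nil⟩, rfl⟩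
  | append_singleton l a ih =>
    obtain ⟨W, hW, htr⟩ := ih
    obtain ⟨W', hW', htr', _⟩ := insert_letter hrefl hsymm a W hW
    exact ⟨W', hW', by rw [htr', htr, ← tr_append]⟩

end Insertion

section Zip
variable {α : Type*}

def fin2cases (i : Fin 2) : i = 0 ∨ i = 1 :=
  match i with
  | 0 => Or.inl rfl
  | 1 => Or.inr rfl

lemma eta2 (g : Fin 2 → Finset α) : ![g 0, g 1] = g := by
  funext i
  match i with
  | 0 => rfl
  | 1 => rfl

def f12 (g : Fin 3 → Finset α) : Fin 2 → Finset α := ![g 0, g 1]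
def f23 (g : Fin 3 → Finset α) : Fin 2 → Finset α := ![g 1, g 2]
def f02 (g : Fin 3 → Finset α) : Fin 2 → Finset α := ![g 0, g 2]

def zip2 : List (Finset α) → List (Finset α) → List (Fin 2 → Finset α)
  | a :: as, c :: cs => ![a, c] :: zip2 as cs
  | _, _ => []

def zip3 : List (Finset α) → List (Finset α) → List (Finset α) → List (Fin 3 → Finset α)
  | a :: as, b :: bs, c :: cs => ![a, b, c] :: zip3 as bs cs
  | _, _, _ => []

lemma zip2_map0 : ∀ {A C : List (Finset α)}, A.length = C.length →
    (zip2 A C).map (fun g => g 0) = A := by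
  intro A
  induction A with
  | nil => intro C h; cases C with
    | nil => rfl
    | cons c cs => simp at h
  | cons a as ih =>
    intro C h
    cases C with
    | nil => simp at h
    | cons c cs =>
      simp only [List.length_cons, Nat.succ.injEq] at h
      show (![a, c] 0) :: (zip2 as cs).map (fun g => g 0) = a :: as
      rw [ih h]
      rfl

lemma zip2_map1 : ∀ {A C : List (Finset α)}, A.length = C.length →
    (zip2 A C).map (fun g => g 1) = C := by
  intro A
  induction A with
  | nil => intro C h; cases C with
    | nil => rfl
    | cons c cs => simp at h
  | cons a as ih =>
    intro C h
    cases C with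
    | nil => simp at h
    | cons c cs =>
      simp only [List.length_cons, Nat.succ.injEq] at h
      show (![a, c] 1) :: (zip2 as cs).map (fun g => g 1) = c :: cs
      rw [ih h]
      rfl

lemma zip2_self : ∀ w : List (Fin 2 → Finset α),
    zip2 (w.map (fun g => g 0)) (w.map (fun g => g 1)) = w := by
  intro w
  induction w with
  | nil => rfl
  | cons g w ih =>
    show ![g 0, g 1] :: zip2 (w.map fun g => g 0) (w.map fun g => g 1) = g :: w
    rw [ih, eta2]

lemma zip2_append : ∀ {A C : List (Finset α)}, A.length = C.length →
    ∀ (A' C' : List (Finset α)),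
    zip2 (A ++ A') (C ++ C') = zip2 A C ++ zip2 A' C' := by
  intro A
  induction A with
  | nil => intro C h A' C'; cases C with
    | nil => rfl
    | cons c cs => simp at h
  | cons a as ih =>
    intro C h A' C'
    cases C with
    | nil => simp at h
    | cons c cs =>
      simp only [List.length_cons, Nat.succ.injEq] at h
      show ![a, c] :: zip2 (as ++ A') (cs ++ C') = ![a, c] :: (zip2 as cs ++ zip2 A' C')
      rw [ih h]

lemma zip2_replicate (k : ℕ) :
    zip2 (List.replicate k (∅ : Finset α)) (List.replicate k ∅)
      = List.replicate k (fun _ => (∅ : Finset α) : Fin 2 → Finset α) := by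
  induction k with
  | zero => rfl
  | succ n ih =>
    rw [List.replicate_succ, List.replicate_succ]
    show ![∅, ∅] :: zip2 (List.replicate n ∅) (List.replicate n ∅) = _
    rw [ih]
    congr 1
    funext i
    match i with
    | 0 => rfl
    | 1 => rfl

lemma zip3_f12 : ∀ {A B C : List (Finset α)}, A.length = B.length → A.length = C.length →
    (zip3 A B C).map f12 = zip2 A B := by
  intro A
  induction A with
  | nil =>
    intro B C hB hC
    cases B with
    | nil => cases C <;> rfl
    | cons b bs => simp at hB
  | cons a as ih =>
    intro B C hB hC
    cases B with
    | nil => simp at hB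
    | cons b bs =>
      cases C with
      | nil => simp at hC
      | cons c cs =>
        simp only [List.length_cons, Nat.succ.injEq] at hB hC
        show f12 ![a, b, c] :: (zip3 as bs cs).map f12 = ![a, b] :: zip2 as bs
        rw [ih hB hC]
        rfl

lemma zip3_f23 : ∀ {A B C : List (Finset α)}, A.length = B.length → A.length = C.length →
    (zip3 A B C).map f23 = zip2 B C := by
  intro A
  induction A with
  | nil =>
    intro B C hB hC
    cases B with
    | nil => cases C <;> rfl
    | cons b bs => simp at hB
  | cons a as ih =>
    intro B C hB hC
    cases B with
    | nil => simp at hB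
    | cons b bs =>
      cases C with
      | nil => simp at hC
      | cons c cs =>
        simp only [List.length_cons, Nat.succ.injEq] at hB hC
        show f23 ![a, b, c] :: (zip3 as bs cs).map f23 = ![b, c] :: zip2 bs cs
        rw [ih hB hC]
        rfl

lemma zip3_f02 : ∀ {A B C : List (Finset α)}, A.length = B.length → A.length = C.length →
    (zip3 A B C).map f02 = zip2 A C := by
  intro A
  induction A with
  | nil =>
    intro B C hB hC
    cases B with
    | nil => cases C <;> rfl
    | cons b bs => simp at hB
  | cons a as ih =>
    intro B C hB hC
    cases B with
    | nil => simp at hB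
    | cons b bs =>
      cases C with
      | nil => simp at hC
      | cons c cs =>
        simp only [List.length_cons, Nat.succ.injEq] at hB hC
        show f02 ![a, b, c] :: (zip3 as bs cs).map f02 = ![a, c] :: zip2 as cs
        rw [ih hB hC]
        rfl

lemma map_f12_0 (U : List (Fin 3 → Finset α)) :
    (U.map f12).map (fun f => f 0) = U.map (fun g => g 0) := by
  rw [List.map_map]; rfl

lemma map_f12_1 (U : List (Fin 3 → Finset α)) :
    (U.map f12).map (fun f => f 1) = U.map (fun g => g 1) := by
  rw [List.map_map]; rfl

lemma map_f23_0 (U : List (Fin 3 → Finset α)) :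
    (U.map f23).map (fun f => f 0) = U.map (fun g => g 1) := by
  rw [List.map_map]; rfl

lemma map_f23_1 (U : List (Fin 3 → Finset α)) :
    (U.map f23).map (fun f => f 1) = U.map (fun g => g 2) := by
  rw [List.map_map]; rfl

lemma map_f02_0 (U : List (Fin 3 → Finset α)) :
    (U.map f02).map (fun f => f 0) = U.map (fun g => g 0) := by
  rw [List.map_map]; rfl

lemma map_f02_1 (U : List (Fin 3 → Finset α)) :
    (U.map f02).map (fun f => f 1) = U.map (fun g => g 2) := by
  rw [List.map_map]; rfl

end Zip


def padLang (α : Type*) : Set (List (Fin 2 → Finset α)) :=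
  {v | ∀ g ∈ v, g = fun _ => (∅ : Finset α)}

/-- The composition of two fnf-automatic binary relations is fnf-automatic. -/

theorem stmt14 {α : Type*} [Fintype α] [DecidableEq α] (D : α → α → Prop)
    (hrefl : ∀ a, D a a) (hsymm : ∀ a b, D a b → D b a)
    (R₁ R₂ : Set (Fin 2 → (traceCon D).Quotient))
    (h₁ : FnfAutomatic D R₁) (h₂ : FnfAutomatic D R₂) :
    FnfAutomatic D {f : Fin 2 → (traceCon D).Quotient |
      ∃ y, ![f 0, y] ∈ R₁ ∧ ![y, f 1] ∈ R₂} := by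
  classical
  have key : LRel D {f : Fin 2 → (traceCon D).Quotient |
      ∃ y, ![f 0, y] ∈ R₁ ∧ ![y, f 1] ∈ R₂}
      = {w | ∃ v ∈ padLang α, w ++ v ∈ (List.map f02 ''
          {u | u ∈ List.map f12 ⁻¹' (LRel D R₁) ∧ u ∈ List.map f23 ⁻¹' (LRel D R₂)})} := by
    ext w
    constructor
    · rintro ⟨hvalid, y, hy1, hy2⟩
      obtain ⟨V, hVvalid, hVtr⟩ := fnf_exists hrefl hsymm y
      set n := w.length with hn
      set m := max n V.length with hm
      have hnm : n ≤ m := le_max_left _ _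
      have hVm : V.length ≤ m := le_max_right _ _
      set A : List (Finset α) := w.map (fun f => f 0) ++ List.replicate (m - n) ∅ with hA
      set B : List (Finset α) := V ++ List.replicate (m - V.length) ∅ with hB
      set C : List (Finset α) := w.map (fun f => f 1) ++ List.replicate (m - n) ∅ with hC
      have hlA : A.length = m := by
        rw [hA]; simp only [List.length_append, List.length_map, List.length_replicate, ← hn]
        omega
      have hlB : B.length = m := by
        rw [hB]; simp only [List.length_append, List.length_replicate]
        omega
      have hlC : C.length = m := by
        rw [hC]; simp only [List.length_append, List.length_map, List.length_replicate, ← hn]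
        omega
      have hAB : A.length = B.length := by rw [hlA, hlB]
      have hAC : A.length = C.length := by rw [hlA, hlC]
      have hBC : B.length = C.length := by rw [hlB, hlC]
      refine ⟨List.replicate (m - n) (fun _ => (∅ : Finset α)), ?_, ?_⟩
      · intro g hg; exact List.eq_of_mem_replicate hg
      · refine ⟨zip3 A B C, ⟨?_, ?_⟩, ?_⟩
        · show List.map f12 (zip3 A B C) ∈ LRel D R₁
          rw [zip3_f12 hAB hAC]
          have e1 : (fun i : Fin 2 => traceOf D ((zip2 A B).map (fun f => f i)))
              = ![traceOf D (w.map (fun f => f 0)), y] := by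
            funext i
            rcases fin2cases i with rfl | rfl
            · show traceOf D ((zip2 A B).map (fun f => f 0)) = traceOf D (w.map (fun f => f 0))
              rw [zip2_map0 hAB, hA, traceOf_pad]
            · show traceOf D ((zip2 A B).map (fun f => f 1)) = y
              rw [zip2_map1 hAB, hB, traceOf_pad, hVtr]
          refine ⟨?_, ?_⟩
          · intro i
            rcases fin2cases i with rfl | rfl
            · rw [zip2_map0 hAB, hA]
              exact valid_pad (hvalid 0) (m - n)
            · rw [zip2_map1 hAB, hB]
              exact valid_pad hVvalid (m - V.length)
          · rw [e1]
            exact hy1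
        · show List.map f23 (zip3 A B C) ∈ LRel D R₂
          rw [zip3_f23 hAB hAC]
          have e2 : (fun i : Fin 2 => traceOf D ((zip2 B C).map (fun f => f i)))
              = ![y, traceOf D (w.map (fun f => f 1))] := by
            funext i
            rcases fin2cases i with rfl | rfl
            · show traceOf D ((zip2 B C).map (fun f => f 0)) = y
              rw [zip2_map0 hBC, hB, traceOf_pad, hVtr]
            · show traceOf D ((zip2 B C).map (fun f => f 1)) = traceOf D (w.map (fun f => f 1))
              rw [zip2_map1 hBC, hC, traceOf_pad]
          refine ⟨?_, ?_⟩
          · intro i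
            rcases fin2cases i with rfl | rfl
            · rw [zip2_map0 hBC, hB]
              exact valid_pad hVvalid (m - V.length)
            · rw [zip2_map1 hBC, hC]
              exact valid_pad (hvalid 1) (m - n)
          · rw [e2]
            exact hy2
        · rw [zip3_f02 hAB hAC, hA, hC,
            zip2_append (by rw [List.length_map, List.length_map]) _ _, zip2_self,
            zip2_replicate]
    · rintro ⟨v, hvP, U, ⟨hU1, hU2⟩, hUmap⟩
      have hv0 : v.map (fun f => f (0 : Fin 2)) = List.replicate v.length (∅ : Finset α) := by
        have h1 : ∀ b ∈ v.map (fun f => f (0 : Fin 2)), b = (∅ : Finset α) := by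
          intro b hb
          obtain ⟨g, hg, rfl⟩ := List.mem_map.1 hb
          rw [hvP g hg]
        have h2 := List.eq_replicate_of_mem h1
        rwa [List.length_map] at h2
      have hv1 : v.map (fun f => f (1 : Fin 2)) = List.replicate v.length (∅ : Finset α) := by
        have h1 : ∀ b ∈ v.map (fun f => f (1 : Fin 2)), b = (∅ : Finset α) := by
          intro b hb
          obtain ⟨g, hg, rfl⟩ := List.mem_map.1 hb
          rw [hvP g hg]
        have h2 := List.eq_replicate_of_mem h1
        rwa [List.length_map] at h2
      obtain ⟨hc1, hr1⟩ := hU1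
      obtain ⟨hc2, hr2⟩ := hU2
      have hU0 : U.map (fun g => g (0 : Fin 3))
          = w.map (fun f => f (0 : Fin 2)) ++ List.replicate v.length ∅ := by
        rw [← map_f02_0, hUmap, List.map_append, hv0]
      have hU2' : U.map (fun g => g (2 : Fin 3))
          = w.map (fun f => f (1 : Fin 2)) ++ List.replicate v.length ∅ := by
        rw [← map_f02_1, hUmap, List.map_append, hv1]
      refine ⟨?_, ?_⟩
      · intro i
        rcases fin2cases i with rfl | rfl
        · have h := hc1 0
          rw [map_f12_0, hU0] at h
          exact valid_append_left h
        · have h := hc2 1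
          rw [map_f23_1, hU2'] at h
          exact valid_append_left h
      · refine ⟨traceOf D (U.map (fun g => g (1 : Fin 3))), ?_, ?_⟩
        · have e1 : (fun i : Fin 2 => traceOf D ((U.map f12).map (fun f => f i)))
              = ![traceOf D (w.map (fun f => f 0)), traceOf D (U.map (fun g => g (1 : Fin 3)))] := by
            funext i
            rcases fin2cases i with rfl | rfl
            · show traceOf D ((U.map f12).map (fun f => f 0)) = traceOf D (w.map (fun f => f 0))
              rw [map_f12_0, hU0, traceOf_pad]
            · show traceOf D ((U.map f12).map (fun f => f 1))
                = traceOf D (U.map (fun g => g (1 : Fin 3)))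
              rw [map_f12_1]
          rw [e1] at hr1
          exact hr1
        · have e2 : (fun i : Fin 2 => traceOf D ((U.map f23).map (fun f => f i)))
              = ![traceOf D (U.map (fun g => g (1 : Fin 3))), traceOf D (w.map (fun f => f 1))] := by
            funext i
            rcases fin2cases i with rfl | rfl
            · show traceOf D ((U.map f23).map (fun f => f 0))
                = traceOf D (U.map (fun g => g (1 : Fin 3)))
              rw [map_f23_0]
            · show traceOf D ((U.map f23).map (fun f => f 1)) = traceOf D (w.map (fun f => f 1))
              rw [map_f23_1, hU2', traceOf_pad]
          rw [e2] at hr2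
          exact hr2
  show (LRel D _).IsRegular
  rw [key]
  exact myreg_quot (padLang α)
    (myreg_image f02 (myreg_inter (myreg_preimage f12 h₁) (myreg_preimage f23 h₂)))
end

section
/- The product of two fnf-automatic trace languages need not be fnf-automatic: with letters a, b, c where (a,b) ∈ D and c is independent of both a and b, the languages L₁ = {[a]^n | n} and L₂ = {[bc]^n | n} are fnf-automatic, but L₁·L₂ is not fnf-automatic, since [(ac)^m b^n] ∈ L₁·L₂ iff m = n. -/
namespace S17
set_option linter.unusedSectionVars false
variable {α : Type*} [DecidableEq α] {D : α → α → Prop}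

/-! ### trace basics -/

noncomputable def trl (D : α → α → Prop) (l : List α) : (traceCon D).Quotient :=
  (traceCon D).mk' (FreeMonoid.ofList l)

lemma trl_append (l₁ l₂ : List α) : trl D (l₁ ++ l₂) = trl D l₁ * trl D l₂ := rfl

lemma trl_nil : trl D [] = 1 := rfl

lemma trl_swap {x y : α} (h : Indep D x y) : trl D [x, y] = trl D [y, x] :=
  (Con.eq _).mpr (ConGen.Rel.of _ _ ⟨x, y, h, rfl, rfl⟩)

lemma traceOf_eq_trl (W : List (Finset α)) :
    traceOf D W = trl D (W.flatMap Finset.toList) := rfl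

lemma trl_singleton (x : α) : trl D [x] = (traceCon D).mk' (FreeMonoid.of x) := rfl

lemma trl_pair (x y : α) :
    trl D [x, y] = (traceCon D).mk' (FreeMonoid.of x) * (traceCon D).mk' (FreeMonoid.of y) := rfl

lemma trl_replicate (x : α) (m : ℕ) :
    trl D (List.replicate m x) = ((traceCon D).mk' (FreeMonoid.of x)) ^ m := by
  induction m with
  | zero => rfl
  | succ m ih =>
    rw [List.replicate_succ, show (x :: List.replicate m x) = [x] ++ List.replicate m x from rfl,
      trl_append, ih, trl_singleton, pow_succ']

lemma trl_flatMap_replicate (A : Finset α) (m : ℕ) :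
    trl D ((List.replicate m A).flatMap Finset.toList) = (trl D A.toList) ^ m := by
  induction m with
  | zero => rfl
  | succ m ih =>
    rw [List.replicate_succ, List.flatMap_cons, trl_append, ih, pow_succ']

/-! ### counting -/

def countCon (x : α) : Con (FreeMonoid α) where
  r u v := (FreeMonoid.toList u).count x = (FreeMonoid.toList v).count x
  iseqv := ⟨fun _ => rfl, Eq.symm, Eq.trans⟩
  mul' := by
    intro w x' y z h1 h2
    show (FreeMonoid.toList (w * y)).count _ = (FreeMonoid.toList (x' * z)).count _
    simp only [FreeMonoid.toList_mul, List.count_append]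
    exact congrArg₂ HAdd.hAdd h1 h2

lemma count_eq_of_rel {u v : FreeMonoid α} (h : traceCon D u v) (x : α) :
    (FreeMonoid.toList u).count x = (FreeMonoid.toList v).count x := by
  have h2 : traceCon D ≤ countCon x := Con.conGen_le.mpr (by
    rintro u v ⟨p, q, -, rfl, rfl⟩
    show (List.count x [p, q]) = (List.count x [q, p])
    simp only [List.count_cons, List.count_nil]
    omega)
  exact h2 h

lemma trl_count {l l' : List α} (h : trl D l = trl D l') (x : α) :
    l.count x = l'.count x :=
  count_eq_of_rel ((Con.eq _).mp h) x

lemma toList_pow_count (u : FreeMonoid α) (n : ℕ) (x : α) :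
    (FreeMonoid.toList (u ^ n)).count x = n * (FreeMonoid.toList u).count x := by
  induction n with
  | zero => simp [show FreeMonoid.toList (u ^ 0) = [] from rfl]
  | succ n ih =>
    rw [pow_succ]
    show (FreeMonoid.toList (u ^ n) ++ FreeMonoid.toList u).count x = _
    rw [List.count_append, ih]
    ring

/-! ### chain facts -/

lemma chain_prop {P Q : Finset α → Prop}
    (hP : ∀ A B : Finset α, Q A → P A → (↑B : Set α) ⊆ DepSet D A → P B) :
    ∀ {x : Finset α} {t : List (Finset α)}, (∀ y ∈ x :: t, Q y) → P x →
      List.Chain' (fun A B : Finset α => (↑B : Set α) ⊆ DepSet D A) (x :: t) → ∀ y ∈ x :: t, P y := by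
  intro x t
  induction t generalizing x with
  | nil =>
    intro _ hx _ y hy
    rw [List.mem_singleton] at hy; subst hy; exact hx
  | cons z t ih =>
    intro hQ hx hch y hy
    have hch' := List.isChain_cons_cons.mp hch
    have hz : P z := hP x z (hQ x (by simp)) hx hch'.1
    rcases List.mem_cons.mp hy with rfl | hy
    · exact hx
    · exact ih (fun y hy => hQ y (List.mem_cons_of_mem _ hy)) hz hch'.2 y hy

lemma DepSet_empty : DepSet D (∅ : Finset α) = ∅ := by
  ext x; simp [DepSet]

lemma empty_tail {t : List (Finset α)}
    (hch : List.Chain' (fun A B : Finset α => (↑B : Set α) ⊆ DepSet D A) ((∅ : Finset α) :: t)) :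
    ∀ y ∈ (∅ : Finset α) :: t, y = ∅ := by
  refine chain_prop (Q := fun _ => True) ?_ (fun _ _ => trivial) rfl hch
  intro A B _ hA hB
  subst hA
  rw [DepSet_empty] at hB
  exact_mod_cast Finset.coe_eq_empty.mp (Set.subset_empty_iff.mp hB)

/-- structure of chains over `{S, ∅}` -/
lemma struct1 {S : Finset α} (hS : S ≠ ∅) :
    ∀ {W : List (Finset α)}, (∀ y ∈ W, y = S ∨ y = ∅) →
      List.Chain' (fun A B : Finset α => (↑B : Set α) ⊆ DepSet D A) W →
      ∃ m k, W = List.replicate m S ++ List.replicate k (∅ : Finset α) := by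
  intro W
  induction W with
  | nil => exact fun _ _ => ⟨0, 0, rfl⟩
  | cons x t ih =>
    intro hmem hch
    rcases hmem x (by simp) with rfl | rfl
    · obtain ⟨m, k, rfl⟩ := ih (fun y hy => hmem y (List.mem_cons_of_mem _ hy)) hch.tail
      exact ⟨m + 1, k, by simp [List.replicate_succ]⟩
    · refine ⟨0, t.length + 1, ?_⟩
      have := empty_tail hch
      simp only [List.replicate, List.nil_append]
      exact List.eq_replicate_of_mem (by simpa using this)



def tdfa (S : Finset α) : DFA (Finset α) (Fin 3) where
  step q x :=
    if q = 0 then (if x = S then 0 else if x = ∅ then 1 else 2)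
    else if q = 1 then (if x = ∅ then 1 else 2) else 2
  start := 0
  accept := {0, 1}

lemma two_nacc (S : Finset α) : (2 : Fin 3) ∉ (tdfa S).accept := by
  simp [tdfa]

lemma ev2 (S : Finset α) : ∀ W, (tdfa S).evalFrom 2 W = 2 := by
  intro W
  induction W with
  | nil => rfl
  | cons x t ih =>
    have hs : (tdfa S).step 2 x = 2 := by simp [tdfa]
    show (tdfa S).evalFrom ((tdfa S).step 2 x) t = 2
    rw [hs]; exact ih

lemma ev1 (S : Finset α) : ∀ W, (tdfa S).evalFrom 1 W ∈ (tdfa S).accept ↔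
    ∃ k, W = List.replicate k (∅ : Finset α) := by
  intro W
  induction W with
  | nil =>
    constructor
    · intro _; exact ⟨0, rfl⟩
    · intro _; simp [tdfa]
  | cons x t ih =>
    show (tdfa S).evalFrom ((tdfa S).step 1 x) t ∈ _ ↔ _
    by_cases hx : x = (∅ : Finset α)
    · subst hx
      have hs : (tdfa S).step 1 (∅ : Finset α) = 1 := by simp [tdfa]
      rw [hs, ih]
      constructor
      · rintro ⟨k, rfl⟩; exact ⟨k+1, by simp [List.replicate_succ]⟩
      · rintro ⟨k, hk⟩
        match k, hk with
        | k+1, hk =>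
          simp only [List.replicate_succ, List.cons.injEq] at hk
          exact ⟨k, hk.2⟩
    · have hs : (tdfa S).step 1 x = 2 := by simp [tdfa, hx]
      rw [hs, ev2]
      constructor
      · intro h; exact absurd h (two_nacc S)
      · rintro ⟨k, hk⟩
        match k, hk with
        | k+1, hk =>
          simp only [List.replicate_succ, List.cons.injEq] at hk
          exact absurd hk.1 hx

lemma ev0 (S : Finset α) (hS : S ≠ ∅) : ∀ W, (tdfa S).evalFrom 0 W ∈ (tdfa S).accept ↔
    ∃ m k, W = List.replicate m S ++ List.replicate k (∅ : Finset α) := by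
  intro W
  induction W with
  | nil =>
    constructor
    · intro _; exact ⟨0, 0, rfl⟩
    · intro _; simp [tdfa]
  | cons x t ih =>
    show (tdfa S).evalFrom ((tdfa S).step 0 x) t ∈ _ ↔ _
    by_cases hxS : x = S
    · have hs : (tdfa S).step 0 x = 0 := by simp [tdfa, hxS]
      rw [hs, ih]
      constructor
      · rintro ⟨m, k, rfl⟩
        exact ⟨m+1, k, by simp [List.replicate_succ, hxS]⟩
      · rintro ⟨m, k, hk⟩
        match m, hk with
        | 0, hk =>
          simp only [List.replicate, List.nil_append] at hk
          match k, hk with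
          | k+1, hk =>
            simp only [List.replicate_succ, List.cons.injEq] at hk
            exact absurd (hxS.symm.trans hk.1) hS
        | m+1, hk =>
          simp only [List.replicate_succ, List.cons_append, List.cons.injEq] at hk
          exact ⟨m, k, hk.2⟩
    · by_cases hx : x = (∅ : Finset α)
      · have hs : (tdfa S).step 0 x = 1 := (by simp [tdfa, hx, hxS]; exact fun h => hS h.symm)
        rw [hs, ev1]
        constructor
        · rintro ⟨k, rfl⟩; exact ⟨0, k+1, by simp [List.replicate_succ, hx]⟩
        · rintro ⟨m, k, hk⟩
          match m, k, hk with
          | m+1, k, hk =>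
            simp only [List.replicate_succ, List.cons_append, List.cons.injEq] at hk
            exact absurd hk.1 hxS
          | 0, k+1, hk =>
            simp only [List.replicate, List.replicate_succ, List.nil_append,
              List.cons.injEq] at hk
            exact ⟨k, hk.2⟩
      · have hs : (tdfa S).step 0 x = 2 := by simp [tdfa, hx, hxS]
        rw [hs, ev2]
        constructor
        · intro h; exact absurd h (two_nacc S)
        · rintro ⟨m, k, hk⟩
          match m, k, hk with
          | m+1, k, hk =>
            simp only [List.replicate_succ, List.cons_append, List.cons.injEq] at hk
            exact absurd hk.1 hxS
          | 0, k+1, hk =>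
            simp only [List.replicate, List.replicate_succ, List.nil_append,
              List.cons.injEq] at hk
            exact absurd hk.1 hx

lemma repLang_regular (S : Finset α) (hS : S ≠ ∅) :
    Language.IsRegular {W : List (Finset α) |
      ∃ m k, W = List.replicate m S ++ List.replicate k (∅ : Finset α)} :=
  ⟨Fin 3, inferInstance, tdfa S, Language.ext fun W => by
    rw [DFA.mem_accepts]; exact ev0 S hS W⟩


/-! ### more structure lemmas -/

lemma pair_toList {x y : α} (hxy : x ≠ y) :
    ({x, y} : Finset α).toList = [x, y] ∨ ({x, y} : Finset α).toList = [y, x] := by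
  have hperm : ({x, y} : Finset α).toList.Perm [x, y] := by
    have h1 : x ∉ ({y} : Finset α) := by simp [hxy]
    have := Finset.toList_insert h1
    rwa [Finset.toList_singleton] at this
  have hx : x ∈ ({x, y} : Finset α).toList := hperm.mem_iff.mpr (by simp)
  have hy : y ∈ ({x, y} : Finset α).toList := hperm.mem_iff.mpr (by simp)
  have hlen : ({x, y} : Finset α).toList.length = 2 := by
    rw [hperm.length_eq]; rfl
  match hl : ({x, y} : Finset α).toList, hlen with
  | [u, v], _ =>
    rw [hl] at hx hy
    simp only [List.mem_cons, List.not_mem_nil, or_false] at hx hy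
    rcases hx with rfl | rfl
    · rcases hy with rfl | rfl
      · exact absurd rfl hxy
      · left; rfl
    · rcases hy with rfl | rfl
      · right; rfl
      · exact absurd rfl hxy

lemma trl_pair_toList {x y : α} (h1 : Indep D x y) (h2 : Indep D y x) :
    trl D ({x, y} : Finset α).toList = trl D [x, y] := by
  rcases pair_toList h1.1 with he | he <;> rw [he]
  exact trl_swap h2

lemma count_pair_toList {x y : α} (hxy : x ≠ y) (z : α) :
    ({x, y} : Finset α).toList.count z = List.count z [x, y] := by
  rcases pair_toList hxy with he | he <;> rw [he] <;>
    simp [List.count_cons] <;> omega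

lemma count_flatMap_replicate (A : Finset α) (m : ℕ) (z : α) :
    ((List.replicate m A).flatMap Finset.toList).count z = m * A.toList.count z := by
  induction m with
  | zero => simp
  | succ m ih =>
    rw [List.replicate_succ, List.flatMap_cons, List.count_append, ih]
    ring

/-- structure of chains over subsets of `{b,c}` with balanced counts -/
lemma struct2 {b c : α} (hbc : b ≠ c) (hDbc : ¬ D b c) (hDcb : ¬ D c b) :
    ∀ {W : List (Finset α)}, (∀ A ∈ W, ∀ z ∈ A, z = b ∨ z = c) →
      List.Chain' (fun A B : Finset α => (↑B : Set α) ⊆ DepSet D A) W →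
      (W.flatMap Finset.toList).count b = (W.flatMap Finset.toList).count c →
      ∃ m k, W = List.replicate m ({b, c} : Finset α) ++ List.replicate k (∅ : Finset α) := by
  intro W
  induction W with
  | nil => exact fun _ _ _ => ⟨0, 0, rfl⟩
  | cons x t ih =>
    intro hmem hch hcount
    by_cases hbx : b ∈ x
    · by_cases hcx : c ∈ x
      · have hx : x = ({b, c} : Finset α) := by
          apply Finset.Subset.antisymm
          · intro z hz
            rcases hmem x (by simp) z hz with rfl | rfl <;> simp
          · intro z hz
            rcases Finset.mem_insert.mp hz with rfl | hz
            · exact hbx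
            · rw [Finset.mem_singleton.mp hz]; exact hcx
        subst hx
        have hcb1 : (({b, c} : Finset α).toList).count b = 1 :=
          List.count_eq_one_of_mem (Finset.nodup_toList _) (Finset.mem_toList.mpr (by simp))
        have hcc1 : (({b, c} : Finset α).toList).count c = 1 :=
          List.count_eq_one_of_mem (Finset.nodup_toList _) (Finset.mem_toList.mpr (by simp))
        rw [List.flatMap_cons, List.count_append, List.count_append, hcb1, hcc1] at hcount
        obtain ⟨m, k, rfl⟩ := ih (fun A hA => hmem A (List.mem_cons_of_mem _ hA)) hch.tail
          (by omega)
        exact ⟨m + 1, k, by simp [List.replicate_succ]⟩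
      · -- b ∈ x, c ∉ x : impossible by counting
        exfalso
        have hprop : ∀ y ∈ x :: t, c ∉ y := by
          refine chain_prop (Q := fun A => ∀ z ∈ A, z = b ∨ z = c) ?_ hmem hcx hch
          intro A B hQ hcA hsub hcB
          obtain ⟨z, hzA, hz⟩ := hsub hcB
          rcases hQ z hzA with rfl | rfl
          · exact hDbc hz
          · exact hcA hzA
        have hcflat : c ∉ (x :: t).flatMap Finset.toList := by
          intro hmem'
          obtain ⟨A, hA, hcA⟩ := List.mem_flatMap.mp hmem'
          exact hprop A hA (Finset.mem_toList.mp hcA)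
        rw [List.count_eq_zero.mpr hcflat] at hcount
        have hbflat : b ∈ (x :: t).flatMap Finset.toList :=
          List.mem_flatMap.mpr ⟨x, by simp, Finset.mem_toList.mpr hbx⟩
        exact List.count_eq_zero.mp hcount hbflat
    · by_cases hcx : c ∈ x
      · -- c ∈ x, b ∉ x : impossible by counting
        exfalso
        have hprop : ∀ y ∈ x :: t, b ∉ y := by
          refine chain_prop (Q := fun A => ∀ z ∈ A, z = b ∨ z = c) ?_ hmem hbx hch
          intro A B hQ hbA hsub hbB
          obtain ⟨z, hzA, hz⟩ := hsub hbB
          rcases hQ z hzA with rfl | rfl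
          · exact hbA hzA
          · exact hDcb hz
        have hbflat : b ∉ (x :: t).flatMap Finset.toList := by
          intro hmem'
          obtain ⟨A, hA, hbA⟩ := List.mem_flatMap.mp hmem'
          exact hprop A hA (Finset.mem_toList.mp hbA)
        rw [List.count_eq_zero.mpr hbflat] at hcount
        have hcflat : c ∈ (x :: t).flatMap Finset.toList :=
          List.mem_flatMap.mpr ⟨x, by simp, Finset.mem_toList.mpr hcx⟩
        exact List.count_eq_zero.mp hcount.symm hcflat
      · have hx : x = (∅ : Finset α) := by
          rw [Finset.eq_empty_iff_forall_notMem]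
          intro z hz
          rcases hmem x (by simp) z hz with rfl | rfl
          · exact hbx hz
          · exact hcx hz
        subst hx
        refine ⟨0, t.length + 1, ?_⟩
        have := empty_tail hch
        simp only [List.replicate, List.nil_append]
        exact List.eq_replicate_of_mem (by simpa using this)

lemma count_pair_left {x y : α} (h : x ≠ y) : List.count x [x, y] = 1 := by
  simp [List.count_cons, h, Ne.symm h]

lemma count_pair_right {x y : α} (h : x ≠ y) : List.count y [x, y] = 1 := by
  simp [List.count_cons, h, Ne.symm h]

lemma count_pair_other {x y z : α} (h1 : z ≠ x) (h2 : z ≠ y) : List.count z [x, y] = 0 := by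
  simp [List.count_cons, Ne.symm h1, Ne.symm h2]

lemma count_single_self (x : α) : List.count x [x] = 1 := by simp

lemma count_single_other {x z : α} (h : z ≠ x) : List.count z [x] = 0 := by
  simp [List.count_cons, List.count_nil, Ne.symm h]

lemma count_replicate_other {x z : α} (h : z ≠ x) (n : ℕ) :
    List.count z (List.replicate n x) = 0 := by
  rw [List.count_replicate]
  simp [h, Ne.symm h]

lemma chain'_rep_rep {β : Type*} {R : β → β → Prop} {x y : β}
    (hxx : R x x) (hxy : R x y) (hyy : R y y) (m k : ℕ) :
    List.Chain' R (List.replicate m x ++ List.replicate k y) := by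
  induction m with
  | zero => exact List.isChain_replicate_of_rel k hyy
  | succ m ih =>
    rw [List.replicate_succ, List.cons_append]
    refine List.isChain_cons.mpr ⟨?_, ih⟩
    intro z hz
    rcases List.mem_append.mp (List.mem_of_mem_head? hz) with h | h
    · rw [List.eq_of_mem_replicate h]; exact hxx
    · rw [List.eq_of_mem_replicate h]; exact hxy

end S17

set_option maxHeartbeats 1000000 in
/-- With `(a,b) ∈ D` and `c` independent of both `a` and `b`, the trace languages
`L₁ = {[a]^n}` and `L₂ = {[bc]^n}` are fnf-automatic, but their product `L₁·L₂` is
not. -/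
theorem stmt17 {α : Type*} [Fintype α] [DecidableEq α] (D : α → α → Prop)
    (hrefl : ∀ a, D a a) (hsymm : ∀ a b, D a b → D b a)
    (a b c : α) (hab : D a b) (hne : a ≠ b)
    (hac : Indep D a c) (hbc : Indep D b c) :
    FnfAutomaticLang D
      {x : (traceCon D).Quotient | ∃ n : ℕ, x = ((traceCon D).mk' (FreeMonoid.of a)) ^ n} ∧
    FnfAutomaticLang D
      {x : (traceCon D).Quotient |
        ∃ n : ℕ, x = ((traceCon D).mk' (FreeMonoid.ofList [b, c])) ^ n} ∧
    ¬ FnfAutomaticLang D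
      {z : (traceCon D).Quotient |
        ∃ m n : ℕ, z = ((traceCon D).mk' (FreeMonoid.of a)) ^ m *
          ((traceCon D).mk' (FreeMonoid.ofList [b, c])) ^ n} := by
  classical
  open S17 in
  refine ⟨?_, ?_, ?_⟩
  · -- L₁ is fnf-automatic
    have heq : LLang D {x | ∃ n : ℕ, x = ((traceCon D).mk' (FreeMonoid.of a)) ^ n}
        = {W : List (Finset α) | ∃ m k, W = List.replicate m ({a} : Finset α) ++
            List.replicate k (∅ : Finset α)} := by
      ext W
      constructor
      · rintro ⟨hind, hch, n, htr⟩
        rw [S17.traceOf_eq_trl, ← S17.trl_replicate] at htr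
        have hmem : ∀ A' ∈ W, A' = ({a} : Finset α) ∨ A' = (∅ : Finset α) := by
          intro A' hA'
          have hsub : A' ⊆ {a} := by
            intro z hz
            rw [Finset.mem_singleton]
            by_contra hza
            have h0 : (W.flatMap Finset.toList).count z = 0 := by
              rw [S17.trl_count htr z]
              exact S17.count_replicate_other hza n
            exact List.count_eq_zero.mp h0
              (List.mem_flatMap.mpr ⟨A', hA', Finset.mem_toList.mpr hz⟩)
          rcases Finset.subset_singleton_iff.mp hsub with h | h
          · exact Or.inr h
          · exact Or.inl h
        obtain ⟨m, k, rfl⟩ := S17.struct1 (Finset.singleton_ne_empty a) hmem hch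
        exact ⟨m, k, rfl⟩
      · rintro ⟨m, k, rfl⟩
        refine ⟨?_, ?_, ⟨m, ?_⟩⟩
        · intro A' hA'
          rcases List.mem_append.mp hA' with h | h <;> rw [List.eq_of_mem_replicate h] <;>
            intro u hu v hv huv
          · rw [Finset.mem_singleton] at hu hv
            exact absurd (hu.trans hv.symm) huv
          · exact absurd hu (Finset.notMem_empty u)
        · show List.Chain' _ _
          refine S17.chain'_rep_rep ?_ ?_ ?_ m k
          · intro z hz
            simp only [Finset.coe_singleton, Set.mem_singleton_iff] at hz
            exact ⟨a, Finset.mem_singleton_self a, by rw [hz]; exact hrefl a⟩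
          · intro z hz
            simp at hz
          · intro z hz
            simp at hz
        · rw [S17.traceOf_eq_trl, List.flatMap_append, S17.trl_append,
            S17.trl_flatMap_replicate, S17.trl_flatMap_replicate, Finset.toList_singleton,
            Finset.toList_empty, S17.trl_nil, one_pow, mul_one, S17.trl_singleton]
    rw [FnfAutomaticLang, heq]
    exact S17.repLang_regular _ (Finset.singleton_ne_empty a)
  · -- L₂ is fnf-automatic
    have hcb : Indep D c b := ⟨hbc.1.symm, fun h => hbc.2 (hsymm _ _ h)⟩
    have heq : LLang D {x | ∃ n : ℕ, x = ((traceCon D).mk' (FreeMonoid.ofList [b, c])) ^ n}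
        = {W : List (Finset α) | ∃ m k, W = List.replicate m ({b, c} : Finset α) ++
            List.replicate k (∅ : Finset α)} := by
      ext W
      constructor
      · rintro ⟨hind, hch, n, htr⟩
        rw [S17.traceOf_eq_trl] at htr
        have htr' : S17.trl D (W.flatMap Finset.toList)
            = S17.trl D (FreeMonoid.toList ((FreeMonoid.ofList [b, c]) ^ n)) := by
          rw [htr, ← map_pow]; rfl
        have hcnt : ∀ z, (W.flatMap Finset.toList).count z = n * List.count z [b, c] := by
          intro z
          rw [S17.trl_count htr' z, S17.toList_pow_count]
          rfl
        have hmem : ∀ A' ∈ W, ∀ z ∈ A', z = b ∨ z = c := by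
          intro A' hA' z hz
          by_contra hcon
          push_neg at hcon
          have h0 : (W.flatMap Finset.toList).count z = 0 := by
            rw [hcnt z, S17.count_pair_other hcon.1 hcon.2]
            ring
          exact List.count_eq_zero.mp h0
            (List.mem_flatMap.mpr ⟨A', hA', Finset.mem_toList.mpr hz⟩)
        have hb1 : List.count b [b, c] = 1 := S17.count_pair_left hbc.1
        have hc1 : List.count c [b, c] = 1 := S17.count_pair_right hbc.1
        obtain ⟨m, k, rfl⟩ := S17.struct2 hbc.1 hbc.2 hcb.2 hmem hch
          (by rw [hcnt b, hcnt c, hb1, hc1])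
        exact ⟨m, k, rfl⟩
      · rintro ⟨m, k, rfl⟩
        refine ⟨?_, ?_, ⟨m, ?_⟩⟩
        · intro A' hA'
          rcases List.mem_append.mp hA' with h | h <;> rw [List.eq_of_mem_replicate h] <;>
            intro u hu v hv huv
          · simp only [Finset.mem_insert, Finset.mem_singleton] at hu hv
            rcases hu with rfl | rfl <;> rcases hv with rfl | rfl
            · exact absurd rfl huv
            · exact hbc
            · exact hcb
            · exact absurd rfl huv
          · exact absurd hu (Finset.notMem_empty u)
        · show List.Chain' _ _
          refine S17.chain'_rep_rep ?_ ?_ ?_ m k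
          · intro z hz
            simp only [Finset.coe_insert, Finset.coe_singleton, Set.mem_insert_iff,
              Set.mem_singleton_iff] at hz
            rcases hz with hz | hz
            · exact ⟨b, by simp, by rw [hz]; exact hrefl b⟩
            · exact ⟨c, by simp, by rw [hz]; exact hrefl c⟩
          · intro z hz
            simp at hz
          · intro z hz
            simp at hz
        · rw [S17.traceOf_eq_trl, List.flatMap_append, S17.trl_append,
            S17.trl_flatMap_replicate, S17.trl_flatMap_replicate,
            Finset.toList_empty, S17.trl_nil, one_pow, mul_one,
            S17.trl_pair_toList hbc hcb]
          rfl
    rw [FnfAutomaticLang, heq]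
    have hne2 : ({b, c} : Finset α) ≠ ∅ := by
      intro h
      exact absurd (h ▸ Finset.mem_insert_self b {c}) (Finset.notMem_empty b)
    exact S17.repLang_regular _ hne2
  · -- the product is not fnf-automatic
    rintro ⟨σ, fin, M, hM⟩
    set N := Fintype.card σ with hN
    have hca : Indep D c a := ⟨hac.1.symm, fun h => hac.2 (hsymm _ _ h)⟩
    have hcb : Indep D c b := ⟨hbc.1.symm, fun h => hbc.2 (hsymm _ _ h)⟩
    set w : List (Finset α) := List.replicate N ({a, c} : Finset α) ++
      List.replicate N ({b} : Finset α) with hw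
    -- w is in the language of normal forms
    have hwL : w ∈ LLang D {z | ∃ m n : ℕ, z = ((traceCon D).mk' (FreeMonoid.of a)) ^ m *
        ((traceCon D).mk' (FreeMonoid.ofList [b, c])) ^ n} := by
      refine ⟨?_, ?_, ⟨N, N, ?_⟩⟩
      · intro A' hA'
        rcases List.mem_append.mp hA' with h | h <;> rw [List.eq_of_mem_replicate h] <;>
          intro u hu v hv huv
        · simp only [Finset.mem_insert, Finset.mem_singleton] at hu hv
          rcases hu with rfl | rfl <;> rcases hv with rfl | rfl
          · exact absurd rfl huv
          · exact hac
          · exact hca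
          · exact absurd rfl huv
        · rw [Finset.mem_singleton] at hu hv
          exact absurd (hu.trans hv.symm) huv
      · show List.Chain' _ _
        refine S17.chain'_rep_rep ?_ ?_ ?_ N N
        · intro z hz
          simp only [Finset.coe_insert, Finset.coe_singleton, Set.mem_insert_iff,
            Set.mem_singleton_iff] at hz
          rcases hz with hz | hz
          · exact ⟨a, by simp, by rw [hz]; exact hrefl a⟩
          · exact ⟨c, by simp, by rw [hz]; exact hrefl c⟩
        · intro z hz
          simp only [Finset.coe_singleton, Set.mem_singleton_iff] at hz
          exact ⟨a, by simp, by rw [hz]; exact hab⟩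
        · intro z hz
          simp only [Finset.coe_singleton, Set.mem_singleton_iff] at hz
          exact ⟨b, by simp, by rw [hz]; exact hrefl b⟩
      · rw [S17.traceOf_eq_trl, List.flatMap_append, S17.trl_append,
          S17.trl_flatMap_replicate, S17.trl_flatMap_replicate, Finset.toList_singleton,
          S17.trl_pair_toList hac hca, S17.trl_pair, S17.trl_singleton]
        -- (A*C)^N * B^N = A^N * (B*C)^N
        set A := (traceCon D).mk' (FreeMonoid.of a)
        set B := (traceCon D).mk' (FreeMonoid.of b)
        set C := (traceCon D).mk' (FreeMonoid.of c)
        have hAC : Commute A C := S17.trl_swap hac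
        have hCB : Commute C B := S17.trl_swap hcb
        have h1 : ((traceCon D).mk' (FreeMonoid.ofList [b, c])) = B * C := rfl
        rw [h1, hAC.mul_pow, (hCB.symm).mul_pow, mul_assoc, (hCB.pow_pow N N).eq]
    have hacc : w ∈ M.accepts := by rw [hM]; exact hwL
    have hlen : N ≤ w.length := by
      rw [hw, List.length_append, List.length_replicate, List.length_replicate]
      omega
    obtain ⟨x, y, z, hsplit, hlen2, hynil, hpump⟩ := M.pumping_lemma hacc hlen
    have hp : x ++ (y ++ y) ++ z ∈ M.accepts := by
      apply hpump
      refine Language.mem_mul.mpr ⟨x ++ (y ++ y), ?_, z, rfl, rfl⟩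
      refine Language.mem_mul.mpr ⟨x, rfl, y ++ y, ?_, rfl⟩
      refine Language.mem_kstar.mpr ⟨[y, y], by simp, ?_⟩
      intro u hu
      rcases List.mem_cons.mp hu with rfl | h2
      · rfl
      · rw [List.mem_singleton.mp h2]; exact rfl
    rw [hM] at hp
    obtain ⟨-, -, m, n, htr⟩ := hp
    -- all the letters of y are {a, c}
    have hxyrep : x ++ y = List.replicate (x.length + y.length) ({a, c} : Finset α) := by
      have hlen2' : x.length + y.length ≤ N := by rw [hN]; exact hlen2
      have h1 : ((x ++ y) ++ z).take (x ++ y).length = x ++ y := List.take_left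
      rw [← hsplit, hw,
        List.take_append_of_le_length
          (by rw [List.length_append, List.length_replicate]; exact hlen2'),
        List.take_replicate,
        min_eq_left (by rw [List.length_append]; exact hlen2'),
        List.length_append] at h1
      exact h1.symm
    have hyrep : y = List.replicate y.length ({a, c} : Finset α) := by
      apply List.eq_replicate_of_mem
      intro u hu
      exact List.eq_of_mem_replicate (hxyrep ▸ List.mem_append_right x hu)
    -- counting
    rw [S17.traceOf_eq_trl] at htr
    have htr' : S17.trl D ((x ++ (y ++ y) ++ z).flatMap Finset.toList)
        = S17.trl D (FreeMonoid.toList ((FreeMonoid.of a) ^ m *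
            (FreeMonoid.ofList [b, c]) ^ n)) := by
      rw [htr, ← map_pow, ← map_pow, ← map_mul]; rfl
    have hrhsb : (FreeMonoid.toList ((FreeMonoid.of a) ^ m *
        (FreeMonoid.ofList [b, c]) ^ n)).count b = n := by
      rw [FreeMonoid.toList_mul, List.count_append, S17.toList_pow_count,
        S17.toList_pow_count]
      have h1 : (FreeMonoid.toList (FreeMonoid.of a)).count b = 0 :=
        S17.count_single_other (Ne.symm hne)
      have h2 : (FreeMonoid.toList (FreeMonoid.ofList [b, c])).count b = 1 :=
        S17.count_pair_left hbc.1
      rw [h1, h2]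
      ring
    have hrhsc : (FreeMonoid.toList ((FreeMonoid.of a) ^ m *
        (FreeMonoid.ofList [b, c]) ^ n)).count c = n := by
      rw [FreeMonoid.toList_mul, List.count_append, S17.toList_pow_count,
        S17.toList_pow_count]
      have h1 : (FreeMonoid.toList (FreeMonoid.of a)).count c = 0 :=
        S17.count_single_other (Ne.symm hac.1)
      have h2 : (FreeMonoid.toList (FreeMonoid.ofList [b, c])).count c = 1 :=
        S17.count_pair_right hbc.1
      rw [h1, h2]
      ring
    have hbalance : ((x ++ (y ++ y) ++ z).flatMap Finset.toList).count b
        = ((x ++ (y ++ y) ++ z).flatMap Finset.toList).count c := by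
      rw [S17.trl_count htr' b, S17.trl_count htr' c, hrhsb, hrhsc]
    -- compute the counts of the pumped word
    have hyb : (y.flatMap Finset.toList).count b = 0 := by
      conv_lhs => rw [hyrep]
      rw [S17.count_flatMap_replicate, S17.count_pair_toList hac.1,
        S17.count_pair_other (Ne.symm hne) hbc.1]
      ring
    have hyc : (y.flatMap Finset.toList).count c = y.length := by
      conv_lhs => rw [hyrep]
      rw [S17.count_flatMap_replicate, S17.count_pair_toList hac.1,
        S17.count_pair_right hac.1, mul_one]
    have hwb : (w.flatMap Finset.toList).count b = N := by
      rw [hw, List.flatMap_append, List.count_append, S17.count_flatMap_replicate,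
        S17.count_flatMap_replicate, S17.count_pair_toList hac.1, Finset.toList_singleton,
        S17.count_pair_other (Ne.symm hne) hbc.1, S17.count_single_self]
      ring
    have hwc : (w.flatMap Finset.toList).count c = N := by
      rw [hw, List.flatMap_append, List.count_append, S17.count_flatMap_replicate,
        S17.count_flatMap_replicate, S17.count_pair_toList hac.1, Finset.toList_singleton,
        S17.count_pair_right hac.1, S17.count_single_other (Ne.symm hbc.1)]
      ring
    have hsplitw : w.flatMap Finset.toList
        = x.flatMap Finset.toList ++ y.flatMap Finset.toList ++ z.flatMap Finset.toList := by
      rw [hsplit, List.flatMap_append, List.flatMap_append]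
    have hsplitp : (x ++ (y ++ y) ++ z).flatMap Finset.toList
        = x.flatMap Finset.toList ++ (y.flatMap Finset.toList ++ y.flatMap Finset.toList)
            ++ z.flatMap Finset.toList := by
      rw [List.flatMap_append, List.flatMap_append, List.flatMap_append]
    rw [hsplitw, List.count_append, List.count_append] at hwb hwc
    rw [hsplitp] at hbalance
    simp only [List.count_append] at hbalance
    rw [hyb, hyc] at hbalance
    have hy0 : y.length = 0 := by omega
    exact hynil (List.length_eq_zero_iff.mp hy0)
end
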